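/- arXiv:math/0609277 — 8 statements merged into one kernel-verified Lean document; each statement's English description precedes it below -/
import Mathlib

section
/- Let [a,b] be a compact interval, let F and F̂ be continuous real-valued functions on [a,b], and let 𝔽 be a bounded measurable real-valued function on [a,b]. Assume: (3) F̂(a) = 𝔽(a) and F̂(b) = 𝔽(b); (4) F̂ is differentiable on (a,b) and its derivative is the restriction of an affine function x ↦ αx + β; (5) F is differentiable on (a,b) and its derivative is convex on (a,b); (6) for every r ∈ [a,b], ∫_r^b F̂(y) dy ≤ ∫_r^b 𝔽(y) dy. Then sup_{x ∈ [a,b]} (F̂(x) − F(x)) ≤ (3/2)·sup_{x ∈ [a,b]} (𝔽(x) − F(x)) − (1/2)·(𝔽(b) − F(b)). -/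
open MeasureTheory Set

/-!
Put `D = F̂ - F`; its derivative `α x + β - f` is concave. If `D` attains its maximum on `[a, b]`
at an interior point `x₀`, then `D' x₀ = 0`, and a mean-value argument using the concavity of `D'`
shows that on `[x₀, b]` the function `D` lies above the parabola with vertex `(x₀, D x₀)` through
`(b, D b)`. Integrating, and using (6),
`(b - x₀) (2 D x₀ + D b) / 3 ≤ ∫_{x₀}^b D ≤ ∫_{x₀}^b (𝔽 - F) ≤ (b - x₀) sup (𝔽 - F)`,
which is the claim since `D b = (𝔽 - F) b`. A maximum at an endpoint is handled by (3).
-/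

theorem ConcaveOn.add_affine {s : Set ℝ} {f : ℝ → ℝ} (hf : ConcaveOn ℝ s f) (α β : ℝ) :
    ConcaveOn ℝ s fun x => f x + (α * x + β) :=
  hf.add (((LinearMap.mulLeft ℝ α).concaveOn hf.1).add_const β)

/-- If `ψ < 0` somewhere inside, the mean value theorem yields `ψ' < 0` at some `u` and `ψ' > 0` at
some later `v`, while concavity of `ψ'` on `[x₀, v]` forces `ψ' u ≥ min (ψ' x₀) (ψ' v) ≥ 0`. -/
theorem nonneg_of_hasDerivAt_of_concaveOn {ψ p : ℝ → ℝ} {x₀ b : ℝ}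
    (hψ : ContinuousOn ψ (Icc x₀ b)) (hψ' : ∀ t ∈ Ioo x₀ b, HasDerivAt ψ (p t) t)
    (hp : ConcaveOn ℝ (Ico x₀ b) p) (hp₀ : 0 ≤ p x₀) (hψ₀ : 0 ≤ ψ x₀) (hψb : 0 ≤ ψ b)
    (t : ℝ) (ht : t ∈ Icc x₀ b) : 0 ≤ ψ t := by
  obtain ⟨hx₀t, htb⟩ := ht
  by_contra! hneg
  have hx₀t : x₀ < t := hx₀t.lt_of_ne (by rintro rfl; linarith)
  have htb : t < b := htb.lt_of_ne (by rintro rfl; linarith)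
  obtain ⟨u, hu, hpu⟩ := exists_hasDerivAt_eq_slope ψ p hx₀t
    (hψ.mono (Icc_subset_Icc_right htb.le)) fun y hy => hψ' y ⟨hy.1, hy.2.trans htb⟩
  obtain ⟨v, hv, hpv⟩ := exists_hasDerivAt_eq_slope ψ p htb
    (hψ.mono (Icc_subset_Icc_left hx₀t.le)) fun y hy => hψ' y ⟨hx₀t.trans hy.1, hy.2⟩
  have hpu : p u < 0 := hpu ▸ div_neg_of_neg_of_pos (by linarith) (by linarith)
  have hpv : 0 < p v := hpv ▸ div_pos (by linarith) (by linarith)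
  have hmin := hp.min_le_of_mem_Icc (left_mem_Ico.2 (hx₀t.trans htb))
    ⟨(hx₀t.trans hv.1).le, hv.2⟩ ⟨hu.1.le, (hu.2.trans hv.1).le⟩
  rcases min_le_iff.1 hmin with h | h <;> linarith

theorem quadratic_le_of_hasDerivAt_of_concaveOn {D d : ℝ → ℝ} {x₀ b : ℝ} (hx₀b : x₀ < b)
    (hD : ContinuousOn D (Icc x₀ b)) (hD' : ∀ t ∈ Ioo x₀ b, HasDerivAt D (d t) t)
    (hd : ConcaveOn ℝ (Ico x₀ b) d) (hd₀ : 0 ≤ d x₀) (t : ℝ) (ht : t ∈ Icc x₀ b) :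
    D x₀ + (D b - D x₀) / (b - x₀) ^ 2 * (t - x₀) ^ 2 ≤ D t := by
  set c := (D b - D x₀) / (b - x₀) ^ 2
  have hq' (t : ℝ) : HasDerivAt (fun t => D x₀ + c * (t - x₀) ^ 2) (2 * c * (t - x₀)) t :=
    ((((hasDerivAt_id' t).sub_const x₀).fun_pow 2).const_mul c |>.const_add (D x₀)).congr_deriv
      (by push_cast; ring)
  have hp : ConcaveOn ℝ (Ico x₀ b) fun t => d t - 2 * c * (t - x₀) := by
    convert hd.add_affine (-(2 * c)) (2 * c * x₀) using 2 with t
    ring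
  have := nonneg_of_hasDerivAt_of_concaveOn (ψ := fun t => D t - (D x₀ + c * (t - x₀) ^ 2))
    (hD.sub (by fun_prop)) (fun t ht => (hD' t ht).sub (hq' t)) hp (by simpa using hd₀)
    (by simp) (by simp [c, (sub_pos.2 hx₀b).ne']) t ht
  linarith

theorem mul_add_div_three_le_integral_of_hasDerivAt_of_concaveOn {D d : ℝ → ℝ} {x₀ b : ℝ}
    (hx₀b : x₀ < b) (hD : ContinuousOn D (Icc x₀ b))
    (hD' : ∀ t ∈ Ioo x₀ b, HasDerivAt D (d t) t) (hd : ConcaveOn ℝ (Ico x₀ b) d)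
    (hd₀ : 0 ≤ d x₀) :
    (b - x₀) * (2 * D x₀ + D b) / 3 ≤ ∫ t in x₀..b, D t := by
  have hq : ∫ t in x₀..b, (D x₀ + (D b - D x₀) / (b - x₀) ^ 2 * (t - x₀) ^ 2) =
      (b - x₀) * (2 * D x₀ + D b) / 3 := by
    rw [intervalIntegral.integral_add intervalIntegrable_const
      (Continuous.intervalIntegrable (by fun_prop) _ _), intervalIntegral.integral_const,
      intervalIntegral.integral_const_mul, intervalIntegral.integral_comp_sub_right (· ^ 2),
      integral_pow, smul_eq_mul]
    field_simp [(sub_pos.2 hx₀b).ne']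
    ring
  rw [← hq]
  exact intervalIntegral.integral_mono_on hx₀b.le (Continuous.intervalIntegrable (by fun_prop) _ _)
    (hD.intervalIntegrable_of_Icc hx₀b.le)
    (quadratic_le_of_hasDerivAt_of_concaveOn hx₀b hD hD' hd hd₀)

theorem intervalIntegral_sub_le_mul {F G H : ℝ → ℝ} {r b M : ℝ} (hrb : r ≤ b)
    (hF : IntervalIntegrable F volume r b) (hG : IntervalIntegrable G volume r b)
    (hH : IntervalIntegrable H volume r b) (hGH : ∫ x in r..b, G x ≤ ∫ x in r..b, H x)
    (hM : ∀ x ∈ Icc r b, H x - F x ≤ M) :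
    ∫ x in r..b, (G x - F x) ≤ (b - r) * M :=
  calc ∫ x in r..b, (G x - F x)
      = (∫ x in r..b, G x) - ∫ x in r..b, F x := intervalIntegral.integral_sub hG hF
    _ ≤ (∫ x in r..b, H x) - ∫ x in r..b, F x := sub_le_sub_right hGH _
    _ = ∫ x in r..b, (H x - F x) := (intervalIntegral.integral_sub hH hF).symm
    _ ≤ ∫ _ in r..b, M :=
      intervalIntegral.integral_mono_on hrb (hH.sub hF) intervalIntegrable_const hM
    _ = (b - r) * M := by rw [intervalIntegral.integral_const, smul_eq_mul]

theorem BddAbove.image_sub_of_continuousOn {α : Type*} [TopologicalSpace α] {G F : α → ℝ}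
    {s : Set α} (hG : BddAbove (G '' s)) (hs : IsCompact s) (hF : ContinuousOn F s) :
    BddAbove ((fun x => G x - F x) '' s) := by
  obtain ⟨C, hC⟩ := hG
  obtain ⟨m, hm⟩ := hs.bddBelow_image hF
  refine ⟨C - m, ?_⟩
  rintro _ ⟨x, hx, rfl⟩
  linarith [hC (mem_image_of_mem G hx), hm (mem_image_of_mem F hx)]

theorem two_mul_add_le_of_isMaxOn_of_concaveOn {D d : ℝ → ℝ} {a b x₀ M : ℝ}
    (hD : ContinuousOn D (Icc a b)) (hD' : ∀ t ∈ Ioo a b, HasDerivAt D (d t) t)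
    (hd : ConcaveOn ℝ (Ioo a b) d) (hx₀ : x₀ ∈ Icc a b) (hmax : IsMaxOn D (Icc a b) x₀)
    (ha : D a ≤ M) (hb : D b ≤ M) (hint : ∀ r ∈ Icc a b, ∫ t in r..b, D t ≤ (b - r) * M) :
    2 * D x₀ + D b ≤ 3 * M := by
  rcases eq_endpoints_or_mem_Ioo_of_mem_Icc hx₀ with rfl | rfl | ⟨hax₀, hx₀b⟩
  · linarith
  · linarith
  have hd₀ : d x₀ = 0 :=
    (hmax.isLocalMax (Icc_mem_nhds hax₀ hx₀b)).hasDerivAt_eq_zero (hD' x₀ ⟨hax₀, hx₀b⟩)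
  have hlow := mul_add_div_three_le_integral_of_hasDerivAt_of_concaveOn hx₀b
    (hD.mono (Icc_subset_Icc_left hax₀.le)) (fun t ht => hD' t ⟨hax₀.trans ht.1, ht.2⟩)
    (hd.subset (Ico_subset_Ioo_left hax₀) (convex_Ico _ _)) hd₀.ge
  have hup := hint x₀ ⟨hax₀.le, hx₀b.le⟩
  have hmean : (2 * D x₀ + D b) / 3 ≤ M :=
    le_of_mul_le_mul_left (by linarith) (sub_pos.2 hx₀b)
  linarith

/-- Marshall-type lemma for convex density estimation, Lemma 1, first part:
under conditions (3)-(6), `sup (F̂ - F) ≤ (3/2) sup (𝔽 - F) - (1/2)(𝔽 - F)(b)` on `[a,b]`. -/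
theorem marshall_lemma_sup
    (a b : ℝ) (hab : a < b) (F Fhat EDF : ℝ → ℝ)
    (hFcont : ContinuousOn F (Icc a b))
    (hFhatcont : ContinuousOn Fhat (Icc a b))
    (hmeas : AEMeasurable EDF (volume.restrict (Icc a b)))
    (hbdd : ∃ C : ℝ, ∀ x ∈ Icc a b, |EDF x| ≤ C)
    (h3a : Fhat a = EDF a) (h3b : Fhat b = EDF b)
    (h4 : ∃ α β : ℝ, ∀ x ∈ Ioo a b, HasDerivAt Fhat (α * x + β) x)
    (h5 : ∃ f : ℝ → ℝ, (∀ x ∈ Ioo a b, HasDerivAt F (f x) x) ∧ ConvexOn ℝ (Ioo a b) f)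
    (h6 : ∀ r ∈ Icc a b, ∫ y in r..b, Fhat y ≤ ∫ y in r..b, EDF y) :
    sSup ((fun x => Fhat x - F x) '' Icc a b) ≤
      (3 / 2) * sSup ((fun x => EDF x - F x) '' Icc a b) - (1 / 2) * (EDF b - F b) := by
  obtain ⟨α, β, hFhat'⟩ := h4
  obtain ⟨f, hF', hf⟩ := h5
  obtain ⟨C, hC⟩ := hbdd
  set M := sSup ((fun x => EDF x - F x) '' Icc a b)
  have hEDF : BddAbove (EDF '' Icc a b) := ⟨C, by
    rintro _ ⟨x, hx, rfl⟩
    exact (le_abs_self _).trans (hC x hx)⟩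
  have hM (x) (hx : x ∈ Icc a b) : EDF x - F x ≤ M :=
    le_csSup (hEDF.image_sub_of_continuousOn isCompact_Icc hFcont) (mem_image_of_mem _ hx)
  have hEDFint : IntegrableOn EDF (Icc a b) :=
    .of_bound measure_Icc_lt_top hmeas.aestronglyMeasurable C
      ((ae_restrict_iff' measurableSet_Icc).2 (ae_of_all _ hC))
  have hint (r) (hr : r ∈ Icc a b) : ∫ t in r..b, (Fhat t - F t) ≤ (b - r) * M := by
    have hsub : Icc r b ⊆ Icc a b := Icc_subset_Icc_left hr.1
    exact intervalIntegral_sub_le_mul hr.2 ((hFcont.mono hsub).intervalIntegrable_of_Icc hr.2)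
      ((hFhatcont.mono hsub).intervalIntegrable_of_Icc hr.2)
      ((intervalIntegrable_iff_integrableOn_Icc_of_le hr.2).2 (hEDFint.mono_set hsub))
      (h6 r hr) fun x hx => hM x (hsub hx)
  obtain ⟨x₀, hx₀, hmax⟩ :=
    isCompact_Icc.exists_isMaxOn (nonempty_Icc.2 hab.le) (hFhatcont.sub hFcont)
  have key := two_mul_add_le_of_isMaxOn_of_concaveOn (D := fun x => Fhat x - F x)
    (d := fun t => -f t + (α * t + β)) (hFhatcont.sub hFcont)
    (fun t ht => ((hFhat' t ht).sub (hF' t ht)).congr_deriv (by ring)) (hf.neg.add_affine α β)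
    hx₀ hmax (by simpa only [h3a] using hM a (left_mem_Icc.2 hab.le))
    (by simpa only [h3b] using hM b (right_mem_Icc.2 hab.le)) hint
  refine csSup_le ((nonempty_Icc.2 hab.le).image _) ?_
  rintro _ ⟨x, hx, rfl⟩
  have hx₀x : Fhat x - F x ≤ Fhat x₀ - F x₀ := isMaxOn_iff.1 hmax x hx
  rw [← h3b]
  linarith
end

section
/- Let [a,b] be a compact interval, let F and F̂ be continuous real-valued functions on [a,b], and let 𝔽 be a bounded measurable real-valued function on [a,b]. Assume: (3) F̂(a) = 𝔽(a) and F̂(b) = 𝔽(b); (4) F̂ is differentiable on (a,b) and its derivative is the restriction of an affine function x ↦ αx + β; (5) F is differentiable on (a,b) and its derivative is convex on (a,b); (7) for every r ∈ [a,b], ∫_a^r F̂(x) dx ≥ ∫_a^r 𝔽(x) dx. Then inf_{x ∈ [a,b]} (F̂(x) − F(x)) ≥ (3/2)·inf_{x ∈ [a,b]} (𝔽(x) − F(x)) − (1/2)·(𝔽(a) − F(a)). -/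
/-!
Let `D = F̂ - F` attain its minimum over `[a, b]` at `t`. If `t` is an endpoint, (3) gives
`D t ≥ inf (𝔽 - F)` directly. Otherwise `ψ = D'` is concave (affine minus convex) and vanishes at
`t`; concavity puts `ψ` above its chords, which gives the quadrature bound
`∫_a^t D ≤ (t - a) (2 D t + D a) / 3`. On the other hand (7) gives
`∫_a^t D ≥ ∫_a^t (𝔽 - F) ≥ (t - a) inf (𝔽 - F)`, and `D a = 𝔽 a - F a` by (3).
-/

open MeasureTheory Set intervalIntegral

theorem trapezoid_le_sub_of_hasDerivAt_of_concaveOn {D ψ : ℝ → ℝ} {s t : ℝ} (hst : s ≤ t)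
    (hD : ContinuousOn D (Icc s t)) (hDψ : ∀ x ∈ Ioo s t, HasDerivAt D (ψ x) x)
    (hψ : ConcaveOn ℝ (Icc s t) ψ) :
    (t - s) * (ψ s + ψ t) / 2 ≤ D t - D s := by
  rcases hst.eq_or_lt with rfl | hst
  · simp
  -- `D` minus the primitive of the chord of `ψ` is monotone, since `ψ` lies above its chord.
  let k : ℝ → ℝ := fun x => D x - (ψ s * (x - s) + (ψ t - ψ s) * (x - s) ^ 2 / (2 * (t - s)))
  have hk : MonotoneOn k (Icc s t) := by
    refine monotoneOn_of_hasDerivWithinAt_nonneg (convex_Icc s t)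
      (f' := fun x => ψ x - (ψ s + (ψ t - ψ s) * (x - s) / (t - s))) ?_ ?_ ?_
    · exact hD.sub (by fun_prop)
    · rw [interior_Icc]
      intro x hx
      refine (((hDψ x hx).sub (((hasDerivAt_id' x).sub_const s).const_mul (ψ s) |>.add
        ((((hasDerivAt_id' x).sub_const s).pow 2).const_mul (ψ t - ψ s) |>.div_const
          (2 * (t - s))))).congr_deriv ?_).hasDerivWithinAt
      field_simp
      ring
    · rw [interior_Icc]
      rintro x ⟨hsx, hxt⟩
      have hchord := hψ.neg.secant_mono_aux1 (left_mem_Icc.2 hst.le) (right_mem_Icc.2 hst.le)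
        hsx hxt
      simp only [Pi.neg_apply] at hchord
      rw [sub_nonneg, ← sub_nonneg]
      have hts : 0 < t - s := sub_pos.2 hst
      field_simp
      nlinarith
  have := hk (left_mem_Icc.2 hst.le) (right_mem_Icc.2 hst.le) hst.le
  simp only [k] at this
  field_simp at this ⊢
  nlinarith

theorem integral_le_of_hasDerivAt_of_concaveOn_of_eq_zero {D ψ : ℝ → ℝ} {a t : ℝ} (hat : a ≤ t)
    (hD : ContinuousOn D (Icc a t)) (hDψ : ∀ x ∈ Ioo a t, HasDerivAt D (ψ x) x)
    (hψ : ConcaveOn ℝ (Ioc a t) ψ) (hψt : ψ t = 0) :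
    ∫ x in a..t, D x ≤ (t - a) * (2 * D t + D a) / 3 := by
  -- `ψ` may blow up at `a`, so compare through an antitone function rather than integrating `ψ`.
  let g : ℝ → ℝ := fun s => (t - s) * (2 * D t + D s) / 3 - ∫ x in s..t, D x
  have hg : AntitoneOn g (Icc a t) := by
    refine antitoneOn_of_hasDerivWithinAt_nonpos (convex_Icc a t)
      (f' := fun s => (2 * (D s - D t) + (t - s) * ψ s) / 3) ?_ ?_ ?_
    · have hprim : ContinuousOn (fun s => ∫ x in s..t, D x) (uIcc a t) :=
        continuousOn_primitive_interval_left (by rw [uIcc_of_le hat]; exact hD.integrableOn_Icc)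
      rw [uIcc_of_le hat] at hprim
      exact (((continuousOn_const.sub continuousOn_id).mul
        (continuousOn_const.add hD)).div_const 3).sub hprim
    · rw [interior_Icc]
      intro s hs
      have hDs : ContinuousAt D s := hD.continuousAt (Icc_mem_nhds hs.1 hs.2)
      have hint : IntervalIntegrable D volume s t :=
        (hD.mono (Icc_subset_Icc_left hs.1.le)).intervalIntegrable_of_Icc hs.2.le
      have hmeas : StronglyMeasurableAtFilter D (nhds s) :=
        (hD.mono Ioo_subset_Icc_self).stronglyMeasurableAtFilter isOpen_Ioo s hs
      have hprod : HasDerivAt (fun s => (t - s) * (2 * D t + D s) / 3)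
          ((-1 * (2 * D t + D s) + (t - s) * ψ s) / 3) s :=
        (((hasDerivAt_id' s).const_sub t).mul ((hDψ s hs).const_add (2 * D t))).div_const 3
      refine ((hprod.sub (integral_hasDerivAt_left hint hmeas hDs)).congr_deriv ?_).hasDerivWithinAt
      ring
    · rw [interior_Icc]
      rintro s ⟨has, hst⟩
      have := trapezoid_le_sub_of_hasDerivAt_of_concaveOn hst.le
        (hD.mono (Icc_subset_Icc_left has.le))
        (fun x hx => hDψ x ⟨has.trans hx.1, hx.2⟩)
        (hψ.subset (fun _ hx => ⟨has.trans_le hx.1, hx.2⟩) (convex_Icc s t))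
      rw [hψt] at this
      linarith
  have := hg (left_mem_Icc.2 hat) (right_mem_Icc.2 hat) hat
  simp only [g, sub_self, zero_mul, zero_div, integral_same] at this
  linarith

theorem integral_le_of_isMinOn_of_concaveOn_deriv {D ψ : ℝ → ℝ} {a b t : ℝ}
    (hD : ContinuousOn D (Icc a b)) (hDψ : ∀ x ∈ Ioo a b, HasDerivAt D (ψ x) x)
    (hψ : ConcaveOn ℝ (Ioo a b) ψ) (ht : t ∈ Ioo a b) (htmin : IsMinOn D (Icc a b) t) :
    ∫ x in a..t, D x ≤ (t - a) * (2 * D t + D a) / 3 :=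
  integral_le_of_hasDerivAt_of_concaveOn_of_eq_zero ht.1.le
    (hD.mono (Icc_subset_Icc_right ht.2.le)) (fun x hx => hDψ x ⟨hx.1, hx.2.trans ht.2⟩)
    (hψ.subset (fun _ hx => ⟨hx.1, hx.2.trans_lt ht.2⟩) (convex_Ioc a t))
    ((htmin.isLocalMin (Icc_mem_nhds ht.1 ht.2)).hasDerivAt_eq_zero (hDψ t ht))

theorem csInf_image_sub_le_of_abs_le {g F : ℝ → ℝ} {s : Set ℝ} {C : ℝ} (hs : IsCompact s)
    (hF : ContinuousOn F s) (hC : ∀ x ∈ s, |g x| ≤ C) {z : ℝ} (hz : z ∈ s) :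
    sInf ((fun x => g x - F x) '' s) ≤ g z - F z := by
  obtain ⟨M, hM⟩ := hs.bddAbove_image hF
  refine csInf_le ⟨-C - M, ?_⟩ (mem_image_of_mem _ hz)
  rintro _ ⟨y, hy, rfl⟩
  linarith [neg_abs_le (g y), hC y hy, hM (mem_image_of_mem F hy)]

theorem intervalIntegrable_of_abs_le {g : ℝ → ℝ} {a b C : ℝ} (hab : a ≤ b)
    (hg : AEMeasurable g (volume.restrict (Icc a b))) (hC : ∀ x ∈ Icc a b, |g x| ≤ C) :
    IntervalIntegrable g volume a b := by
  refine (intervalIntegrable_iff_integrableOn_Icc_of_le hab).2 ?_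
  exact Integrable.of_bound hg.aestronglyMeasurable C
    ((ae_restrict_iff' measurableSet_Icc).2 (.of_forall hC))

theorem mul_sub_le_integral_sub_of_integral_le {E G F : ℝ → ℝ} {a t c : ℝ} (hat : a ≤ t)
    (hE : IntervalIntegrable E volume a t) (hG : ContinuousOn G (Icc a t))
    (hF : ContinuousOn F (Icc a t)) (hEG : ∫ x in a..t, E x ≤ ∫ x in a..t, G x)
    (hc : ∀ x ∈ Icc a t, c ≤ E x - F x) :
    c * (t - a) ≤ ∫ x in a..t, (G x - F x) := by
  have hF' : IntervalIntegrable F volume a t := hF.intervalIntegrable_of_Icc hat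
  calc c * (t - a) ≤ ∫ x in a..t, (E x - F x) := by
        simpa [mul_comm] using integral_mono_on hat intervalIntegrable_const (hE.sub hF') hc
    _ ≤ ∫ x in a..t, (G x - F x) := by
        rw [integral_sub hE hF', integral_sub (hG.intervalIntegrable_of_Icc hat) hF']
        linarith

/-- Marshall-type lemma for convex density estimation, Lemma 1, second part:
under conditions (3)-(5) and (7), `inf (F̂ - F) ≥ (3/2) inf (𝔽 - F) - (1/2)(𝔽 - F)(a)` on `[a,b]`. -/
theorem marshall_lemma_inf
    (a b : ℝ) (hab : a < b) (F Fhat EDF : ℝ → ℝ)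
    (hFcont : ContinuousOn F (Icc a b))
    (hFhatcont : ContinuousOn Fhat (Icc a b))
    (hmeas : AEMeasurable EDF (volume.restrict (Icc a b)))
    (hbdd : ∃ C : ℝ, ∀ x ∈ Icc a b, |EDF x| ≤ C)
    (h3a : Fhat a = EDF a) (h3b : Fhat b = EDF b)
    (h4 : ∃ α β : ℝ, ∀ x ∈ Ioo a b, HasDerivAt Fhat (α * x + β) x)
    (h5 : ∃ f : ℝ → ℝ, (∀ x ∈ Ioo a b, HasDerivAt F (f x) x) ∧ ConvexOn ℝ (Ioo a b) f)
    (h7 : ∀ r ∈ Icc a b, ∫ x in a..r, EDF x ≤ ∫ x in a..r, Fhat x) :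
    (3 / 2) * sInf ((fun x => EDF x - F x) '' Icc a b) - (1 / 2) * (EDF a - F a) ≤
      sInf ((fun x => Fhat x - F x) '' Icc a b) := by
  obtain ⟨C, hC⟩ := hbdd
  obtain ⟨α, β, hFhat'⟩ := h4
  obtain ⟨f, hF', hf⟩ := h5
  set ε := sInf ((fun x => EDF x - F x) '' Icc a b)
  set D := fun x => Fhat x - F x
  have hDcont : ContinuousOn D (Icc a b) := hFhatcont.sub hFcont
  obtain ⟨t, ht, htmin⟩ := isCompact_Icc.exists_isMinOn (nonempty_Icc.2 hab.le) hDcont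
  have hε x (hx : x ∈ Icc a b) : ε ≤ EDF x - F x :=
    csInf_image_sub_le_of_abs_le isCompact_Icc hFcont hC hx
  have hDa : D a = EDF a - F a := by simp [D, h3a]
  have hεa : ε ≤ D a := hDa ▸ hε a (left_mem_Icc.2 hab.le)
  have key : 3 * ε ≤ 2 * D t + D a := by
    rcases ht.1.eq_or_lt with rfl | hat
    · linarith
    rcases ht.2.eq_or_lt with rfl | htb
    · linarith [show ε ≤ D t by simpa [D, h3b] using hε t ht]
    have hupper := integral_le_of_isMinOn_of_concaveOn_deriv hDcont
      (fun x hx => (hFhat' x hx).sub (hF' x hx))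
      ((((LinearMap.mul ℝ ℝ α).concaveOn (convex_Ioo a b)).add_const β).sub hf) ⟨hat, htb⟩ htmin
    have hsub : Icc a t ⊆ Icc a b := Icc_subset_Icc_right ht.2
    have hlower := mul_sub_le_integral_sub_of_integral_le hat.le
      ((intervalIntegrable_of_abs_le hab.le hmeas hC).mono_set
        (by rw [uIcc_of_le hab.le, uIcc_of_le hat.le]; exact hsub))
      (hFhatcont.mono hsub) (hFcont.mono hsub) (h7 t ht) fun x hx => hε x (hsub hx)
    nlinarith
  refine le_csInf ((nonempty_Icc.2 hab.le).image D) ?_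
  rintro _ ⟨x, hx, rfl⟩
  linarith [isMinOn_iff.1 htmin x hx]
end

section
/- Fix c ≥ 1 and ε ∈ (0, 1/2]. Define on [0,1]: F(x) := x² − c for x ∈ [ε,1] and F(x) := (x/ε)(ε² − c) for x ∈ [0,ε]; F̂(x) := 0 for all x ∈ [0,1]; and 𝔽(x) := x² − 1/3 for 0 < x < 1 with 𝔽(0) = 𝔽(1) = 0. Then: (i) F̂(0) = 𝔽(0) and F̂(1) = 𝔽(1); (ii) ∫_r^1 F̂(y) dy ≤ ∫_r^1 𝔽(y) dy for every r ∈ [0,1]; (iii) sup_{x ∈ [0,1]} (F̂(x) − F(x)) = c − ε², sup_{x ∈ [0,1]} (𝔽(x) − F(x)) = c − 1/3, and 𝔽(1) − F(1) = c − 1; consequently (3/2)·sup_{[0,1]}(𝔽 − F) − (1/2)·(𝔽(1) − F(1)) = sup_{[0,1]}(F̂ − F) + ε². -/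
open MeasureTheory Set

/-- Sharpness of the constants 3/2 and 1/2 in Lemma 1: the explicit example on `[0,1]`. -/
theorem marshall_constants_sharp
    (c ε : ℝ) (hc : 1 ≤ c) (hε : ε ∈ Ioc (0 : ℝ) (1 / 2))
    (F Fhat EDF : ℝ → ℝ)
    (hF : ∀ x ∈ Icc (0 : ℝ) 1, F x = if x ≤ ε then (x / ε) * (ε ^ 2 - c) else x ^ 2 - c)
    (hFhat : ∀ x ∈ Icc (0 : ℝ) 1, Fhat x = 0)
    (hEDF : ∀ x ∈ Icc (0 : ℝ) 1, EDF x = if 0 < x ∧ x < 1 then x ^ 2 - 1 / 3 else 0) :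
    (Fhat 0 = EDF 0 ∧ Fhat 1 = EDF 1) ∧
    (∀ r ∈ Icc (0 : ℝ) 1, ∫ y in r..1, Fhat y ≤ ∫ y in r..1, EDF y) ∧
    sSup ((fun x => Fhat x - F x) '' Icc (0 : ℝ) 1) = c - ε ^ 2 ∧
    sSup ((fun x => EDF x - F x) '' Icc (0 : ℝ) 1) = c - 1 / 3 ∧
    EDF 1 - F 1 = c - 1 ∧
    (3 / 2) * sSup ((fun x => EDF x - F x) '' Icc (0 : ℝ) 1) - (1 / 2) * (EDF 1 - F 1) =
      sSup ((fun x => Fhat x - F x) '' Icc (0 : ℝ) 1) + ε ^ 2 := by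
  obtain ⟨hε0, hε2⟩ := hε
  have hε1 : ε ≤ 1 := hε2.trans (by norm_num)
  have hεmem : ε ∈ Icc (0:ℝ) 1 := ⟨hε0.le, hε1⟩
  have h0 : (0:ℝ) ∈ Icc (0:ℝ) 1 := by norm_num
  have h1 : (1:ℝ) ∈ Icc (0:ℝ) 1 := by norm_num
  -- sSup for Fhat - F
  have hsup1 : IsGreatest ((fun x => Fhat x - F x) '' Icc (0 : ℝ) 1) (c - ε ^ 2) := by
    constructor
    · refine ⟨ε, hεmem, ?_⟩
      show Fhat ε - F ε = c - ε ^ 2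
      rw [hFhat ε hεmem, hF ε hεmem]
      simp [le_refl, div_self hε0.ne']
    · rintro y ⟨x, hx, rfl⟩
      show Fhat x - F x ≤ c - ε ^ 2
      rw [hFhat x hx, hF x hx]
      split_ifs with h
      · have hd : x / ε ≤ 1 := (div_le_one hε0).2 h
        have hd0 : 0 ≤ x / ε := div_nonneg hx.1 hε0.le
        have hcε : 0 ≤ c - ε ^ 2 := by nlinarith
        nlinarith [mul_le_mul_of_nonneg_right hd hcε]
      · push_neg at h
        nlinarith [hx.2]
  have hs1 : sSup ((fun x => Fhat x - F x) '' Icc (0 : ℝ) 1) = c - ε ^ 2 := hsup1.csSup_eq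
  -- sSup for EDF - F
  set x0 : ℝ := (ε + 1) / 2 with hx0def
  have hx0ε : ε < x0 := by rw [hx0def]; linarith
  have hx0pos : 0 < x0 := hε0.trans hx0ε
  have hx0lt : x0 < 1 := by rw [hx0def]; linarith
  have hx0mem : x0 ∈ Icc (0:ℝ) 1 := ⟨hx0pos.le, hx0lt.le⟩
  have hsup2 : IsGreatest ((fun x => EDF x - F x) '' Icc (0 : ℝ) 1) (c - 1 / 3) := by
    constructor
    · refine ⟨x0, hx0mem, ?_⟩
      show EDF x0 - F x0 = c - 1 / 3
      rw [hEDF x0 hx0mem, hF x0 hx0mem]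
      rw [if_pos ⟨hx0pos, hx0lt⟩, if_neg (not_le.2 hx0ε)]
      ring
    · rintro y ⟨x, hx, rfl⟩
      show EDF x - F x ≤ c - 1 / 3
      rw [hEDF x hx, hF x hx]
      rcases em (0 < x ∧ x < 1) with h | h <;> rcases em (x ≤ ε) with h' | h'
      · -- 0 < x < 1, x ≤ ε
        rw [if_pos h, if_pos h']
        have hd : x / ε ≤ 1 := (div_le_one hε0).2 h'
        have hd0 : 0 ≤ x / ε := div_nonneg hx.1 hε0.le
        have hcε : 0 ≤ c - ε ^ 2 := by nlinarith
        nlinarith [mul_le_mul_of_nonneg_right hd hcε]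
      · rw [if_pos h, if_neg h']; linarith
      · -- x = 0 or x = 1, here x ≤ ε so x = 0
        rw [if_neg h, if_pos h']
        push_neg at h
        have hx0' : x = 0 := by
          rcases lt_or_ge 0 x with hp | hp
          · have := h hp; linarith [h'.trans hε1, this, hε2]
          · linarith [hx.1]
        subst hx0'
        simp
        linarith
      · -- x = 1
        rw [if_neg h, if_neg h']
        push_neg at h h'
        have hx1 : x = 1 := by
          rcases lt_or_ge 0 x with hp | hp
          · linarith [h hp, hx.2]
          · linarith [hε0, h']
        subst hx1
        nlinarith
  have hs2 : sSup ((fun x => EDF x - F x) '' Icc (0 : ℝ) 1) = c - 1 / 3 := hsup2.csSup_eq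
  have hend : EDF 1 - F 1 = c - 1 := by
    rw [hEDF 1 h1, hF 1 h1]
    rw [if_neg (by norm_num), if_neg (not_le.2 (hε2.trans_lt (by norm_num)))]
    ring
  refine ⟨⟨?_, ?_⟩, ?_, hs1, hs2, hend, ?_⟩
  · rw [hFhat 0 h0, hEDF 0 h0]; norm_num
  · rw [hFhat 1 h1, hEDF 1 h1]; norm_num
  · intro r hr
    have hr1 : r ≤ 1 := hr.2
    have hint1 : ∫ y in r..1, Fhat y = 0 := by
      rw [intervalIntegral.integral_congr (g := fun _ => (0:ℝ))
        (by intro x hx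
            rw [uIcc_of_le hr1] at hx
            exact hFhat x ⟨hr.1.trans hx.1, hx.2⟩)]
      simp
    have hint2 : ∫ y in r..1, EDF y = ∫ y in r..1, (y ^ 2 - 1/3 : ℝ) := by
      apply intervalIntegral.integral_congr_ae
      have hne : ∀ᵐ x : ℝ, x ∉ ({1} : Set ℝ) :=
        measure_eq_zero_iff_ae_notMem.mp (measure_singleton 1)
      filter_upwards [hne] with x hx hxI
      rw [Set.uIoc_of_le hr1] at hxI
      rw [hEDF x ⟨hr.1.trans hxI.1.le, hxI.2⟩]
      rw [if_pos ⟨hr.1.trans_lt hxI.1, lt_of_le_of_ne hxI.2 (by simpa using hx)⟩]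
    have hval : ∫ y in r..1, (y ^ 2 - 1/3 : ℝ) = (r - r ^ 3) / 3 := by
      rw [intervalIntegral.integral_sub (intervalIntegral.intervalIntegrable_pow 2)
        intervalIntegrable_const]
      simp [integral_pow]
      ring
    rw [hint1, hint2, hval]
    nlinarith [mul_nonneg (mul_nonneg hr.1 (sub_nonneg.2 hr.2)) (by linarith [hr.1] : (0:ℝ) ≤ 1 + r)]
  · rw [hs1, hs2, hend]; ring
end

section
/- Let n ≥ 1 and let x_1, …, x_n ∈ (0,∞). Let 𝒦 denote the set of all functions h : [0,∞) → ℝ that are convex on [0,∞) and Lebesgue integrable over [0,∞). Define the log-likelihood criterion Ψ(h) := (1/n)·∑_{i=1}^n log h(x_i) − ∫_0^∞ h(x) dx. Suppose f̂ ∈ 𝒦 satisfies f̂(x_i) > 0 for all i and Ψ(f̂) ≥ Ψ(h) for every h ∈ 𝒦 with h(x_i) > 0 for all i. Let Δ : [0,∞) → ℝ be Lebesgue integrable over [0,∞) and suppose there exists t > 0 such that f̂ + t·Δ ∈ 𝒦. Then (1/n)·∑_{i=1}^n Δ(x_i)/f̂(x_i) ≤ ∫_0^∞ Δ(x) dx.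 -/
open MeasureTheory Set Filter Topology

/-!
For `0 ≤ s ≤ t` the function `f̂ + s • Δ` is a convex combination of `f̂` and `f̂ + t • Δ`, hence
admissible, and for small `s` it stays positive at the data points. So `s = 0` is a one-sided
local maximum of the criterion `Ψ(f̂ + s • Δ)`, whose derivative at `0` is
`(1/n) ∑ Δ(xᵢ)/f̂(xᵢ) - ∫ Δ`; one-sided Fermat makes this derivative nonpositive.
-/

theorem IsLocalMaxOn.hasDerivWithinAt_Ici_nonpos {f : ℝ → ℝ} {f' a : ℝ}
    (h : IsLocalMaxOn f (Ici a) a) (hf : HasDerivWithinAt f f' (Ici a) a) : f' ≤ 0 := by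
  have hone : (1 : ℝ) ∈ posTangentConeAt (Ici a) a :=
    mem_posTangentConeAt_of_segment_subset (by simp [Icc_subset_Ici_self])
  simpa using h.hasFDerivWithinAt_nonpos hf.hasFDerivWithinAt hone

theorem ConvexOn.add_mul_of_mem_Icc {E : Type*} [AddCommGroup E] [Module ℝ E] {s : Set E}
    {f g : E → ℝ} {t r : ℝ} (hf : ConvexOn ℝ s f) (ht : 0 < t)
    (hft : ConvexOn ℝ s fun y => f y + t * g y) (hr : r ∈ Icc 0 t) :
    ConvexOn ℝ s fun y => f y + r * g y := by
  have hcomb : (fun y => f y + r * g y) =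
      (fun y => (1 - r / t) • f y) + fun y => (r / t) • (f y + t * g y) := by
    funext y
    simp only [Pi.add_apply, smul_eq_mul]
    field_simp
    ring
  rw [hcomb]
  exact (hf.smul (sub_nonneg.2 ((div_le_one ht).2 hr.2))).add (hft.smul (div_nonneg hr.1 ht.le))

theorem hasDerivAt_sum_log_add_mul {ι : Type*} [Fintype ι] {a : ι → ℝ} (ha : ∀ i, a i ≠ 0)
    (b : ι → ℝ) :
    HasDerivAt (fun s => ∑ i, Real.log (a i + s * b i)) (∑ i, b i / a i) 0 := by
  refine HasDerivAt.fun_sum fun i _ => ?_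
  have hlin : HasDerivAt (fun s => a i + s * b i) (b i) 0 := by
    simpa using ((hasDerivAt_id (0 : ℝ)).mul_const (b i)).const_add (a i)
  simpa using hlin.log (by simpa using ha i)

theorem eventually_forall_pos_add_mul {ι : Type*} [Finite ι] {a : ι → ℝ} (ha : ∀ i, 0 < a i)
    (b : ι → ℝ) : ∀ᶠ s in 𝓝 (0 : ℝ), ∀ i, 0 < a i + s * b i := by
  refine eventually_all.2 fun i => ?_
  have hcont : Continuous fun s : ℝ => a i + s * b i := by fun_prop
  simpa using hcont.continuousAt.eventually (lt_mem_nhds (by simpa using ha i))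

theorem mle_directional_derivative_general
    (n : ℕ) (x : Fin n → ℝ)
    (fhat : ℝ → ℝ)
    (hfconv : ConvexOn ℝ (Ici 0) fhat) (hfint : IntegrableOn fhat (Ici 0))
    (hfpos : ∀ i, 0 < fhat (x i))
    (hopt : ∀ h : ℝ → ℝ, ConvexOn ℝ (Ici 0) h → IntegrableOn h (Ici 0) →
      (∀ i, 0 < h (x i)) →
      (n : ℝ)⁻¹ * ∑ i, Real.log (h (x i)) - ∫ y in Ici (0 : ℝ), h y ≤
        (n : ℝ)⁻¹ * ∑ i, Real.log (fhat (x i)) - ∫ y in Ici (0 : ℝ), fhat y)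
    (Δ : ℝ → ℝ) (hΔint : IntegrableOn Δ (Ici 0))
    (hdir : ∃ t : ℝ, 0 < t ∧ ConvexOn ℝ (Ici 0) (fun y => fhat y + t * Δ y) ∧
      IntegrableOn (fun y => fhat y + t * Δ y) (Ici 0)) :
    (n : ℝ)⁻¹ * ∑ i, Δ (x i) / fhat (x i) ≤ ∫ y in Ici (0 : ℝ), Δ y := by
  obtain ⟨t, ht, hconv_t, -⟩ := hdir
  set Ψ : ℝ → ℝ := fun s => (n : ℝ)⁻¹ * ∑ i, Real.log (fhat (x i) + s * Δ (x i)) -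
    ((∫ y in Ici (0 : ℝ), fhat y) + s * ∫ y in Ici (0 : ℝ), Δ y)
  have hmax : IsLocalMaxOn Ψ (Ici 0) 0 := by
    have hnear : ∀ᶠ s in 𝓝 0, (∀ i, 0 < fhat (x i) + s * Δ (x i)) ∧ s < t :=
      (eventually_forall_pos_add_mul hfpos _).and (eventually_lt_nhds ht)
    filter_upwards [nhdsWithin_le_nhds hnear, self_mem_nhdsWithin] with s ⟨hpos, hst⟩ hs
    have hopt_s := hopt _ (hfconv.add_mul_of_mem_Icc ht hconv_t ⟨hs, hst.le⟩)
      (hfint.add (hΔint.const_mul s)) hpos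
    rw [integral_add hfint (hΔint.const_mul s), integral_const_mul] at hopt_s
    simpa [Ψ] using hopt_s
  have hderiv : HasDerivAt Ψ
      ((n : ℝ)⁻¹ * ∑ i, Δ (x i) / fhat (x i) - ∫ y in Ici (0 : ℝ), Δ y) 0 := by
    refine ((hasDerivAt_sum_log_add_mul (fun i => (hfpos i).ne') _).const_mul _).sub ?_
    simpa using ((hasDerivAt_id (0 : ℝ)).mul_const (∫ y in Ici (0 : ℝ), Δ y)).const_add
      (∫ y in Ici (0 : ℝ), fhat y)
  linarith [hmax.hasDerivWithinAt_Ici_nonpos hderiv.hasDerivWithinAt]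

/-- Proposition 2, maximum likelihood case: first-order characterization of the
MLE of a convex density on `[0,∞)`. -/
theorem mle_directional_derivative
    (n : ℕ) (hn : 1 ≤ n) (x : Fin n → ℝ) (hx : ∀ i, 0 < x i)
    (fhat : ℝ → ℝ)
    (hfconv : ConvexOn ℝ (Ici 0) fhat) (hfint : IntegrableOn fhat (Ici 0))
    (hfpos : ∀ i, 0 < fhat (x i))
    (hopt : ∀ h : ℝ → ℝ, ConvexOn ℝ (Ici 0) h → IntegrableOn h (Ici 0) →
      (∀ i, 0 < h (x i)) →
      (n : ℝ)⁻¹ * ∑ i, Real.log (h (x i)) - ∫ y in Ici (0 : ℝ), h y ≤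
        (n : ℝ)⁻¹ * ∑ i, Real.log (fhat (x i)) - ∫ y in Ici (0 : ℝ), fhat y)
    (Δ : ℝ → ℝ) (hΔint : IntegrableOn Δ (Ici 0))
    (hdir : ∃ t : ℝ, 0 < t ∧ ConvexOn ℝ (Ici 0) (fun y => fhat y + t * Δ y) ∧
      IntegrableOn (fun y => fhat y + t * Δ y) (Ici 0)) :
    (n : ℝ)⁻¹ * ∑ i, Δ (x i) / fhat (x i) ≤ ∫ y in Ici (0 : ℝ), Δ y :=
  mle_directional_derivative_general n x fhat hfconv hfint hfpos hopt Δ hΔint hdir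
end

section
/- Let n ≥ 1 and let x_1, …, x_n ∈ (0,∞). Let 𝒦 denote the set of all functions h : [0,∞) → ℝ that are convex on [0,∞) and Lebesgue integrable over [0,∞). Define the least squares criterion Φ(h) := ∫_0^∞ h(x)² dx − (2/n)·∑_{i=1}^n h(x_i). Suppose f̂ ∈ 𝒦 is square-integrable over [0,∞) and satisfies Φ(f̂) ≤ Φ(h) for every square-integrable h ∈ 𝒦. Let Δ : [0,∞) → ℝ be square-integrable over [0,∞) and suppose there exists t > 0 such that f̂ + t·Δ ∈ 𝒦. Then (1/n)·∑_{i=1}^n Δ(x_i) ≤ ∫_0^∞ Δ(x)·f̂(x) dx. -/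
/-!
For `0 < s ≤ t` the function `fhat + s • Δ` is a convex combination of `fhat` and `fhat + t • Δ`,
hence an admissible competitor. Expanding the square, the criterion changes by
`2 s (∫ Δ fhat - n⁻¹ ∑ Δ (x i)) + s² ∫ Δ²`; this is nonnegative for all small `s > 0` by
optimality, which forces the linear coefficient to be nonnegative.
-/

open MeasureTheory Set Filter Topology

theorem ConvexOn.add_smul_of_mem_Icc {E : Type*} [AddCommGroup E] [Module ℝ E] {D : Set E}
    {f g : E → ℝ} {s t : ℝ} (hf : ConvexOn ℝ D f) (hft : ConvexOn ℝ D (f + t • g))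
    (ht : 0 < t) (hs : s ∈ Icc 0 t) : ConvexOn ℝ D (f + s • g) := by
  have hst : s / t ∈ Icc (0 : ℝ) 1 := ⟨div_nonneg hs.1 ht.le, (div_le_one ht).2 hs.2⟩
  have hcomb : f + s • g = (1 - s / t) • f + (s / t) • (f + t • g) := by
    ext y
    simp only [Pi.add_apply, Pi.smul_apply, smul_eq_mul]
    field_simp
    ring
  rw [hcomb]
  exact (hf.smul (sub_nonneg.2 hst.2)).add (hft.smul hst.1)

theorem nonneg_of_forall_nonneg_mul_add_sq_mul {a c t : ℝ} (ht : 0 < t)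
    (h : ∀ s ∈ Ioc 0 t, 0 ≤ s * a + s ^ 2 * c) : 0 ≤ a := by
  have hlim : Tendsto (fun s => a + s * c) (𝓝[>] 0) (𝓝 a) := by
    have hcont : Continuous fun s : ℝ => a + s * c := by fun_prop
    simpa using (hcont.tendsto 0).mono_left nhdsWithin_le_nhds
  refine ge_of_tendsto hlim ?_
  filter_upwards [Ioc_mem_nhdsGT ht] with s hs
  nlinarith [h s hs, hs.1]

section Criterion

variable {α : Type*} [MeasurableSpace α] {μ : Measure α}

noncomputable def lsCriterion (μ : Measure α) {n : ℕ} (x : Fin n → α) (h : α → ℝ) : ℝ :=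
  (∫ y, h y ^ 2 ∂μ) - (2 / n) * ∑ i, h (x i)

theorem lsCriterion_add_smul {n : ℕ} (x : Fin n → α) {f g : α → ℝ} (hf : MemLp f 2 μ)
    (hg : MemLp g 2 μ) (s : ℝ) :
    lsCriterion μ x (f + s • g) = lsCriterion μ x f +
      2 * s * ((∫ y, g y * f y ∂μ) - (n : ℝ)⁻¹ * ∑ i, g (x i)) + s ^ 2 * ∫ y, g y ^ 2 ∂μ := by
  have hgf : Integrable (fun y => g y * f y) μ := hg.integrable_mul hf
  have hexp : (fun y => (f + s • g) y ^ 2) =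
      fun y => f y ^ 2 + 2 * s * (g y * f y) + s ^ 2 * g y ^ 2 := by
    ext y
    simp only [Pi.add_apply, Pi.smul_apply, smul_eq_mul]
    ring
  simp only [lsCriterion, hexp]
  rw [integral_add, integral_add, integral_const_mul, integral_const_mul]
  · simp only [Pi.add_apply, Pi.smul_apply, smul_eq_mul]
    rw [Finset.sum_add_distrib, ← Finset.mul_sum]
    ring
  exacts [hf.integrable_sq, hgf.const_mul _, hf.integrable_sq.add (hgf.const_mul _),
    hg.integrable_sq.const_mul _]

end Criterion

theorem lse_directional_derivative_general
    (n : ℕ) (x : Fin n → ℝ)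
    (fhat : ℝ → ℝ)
    (hfconv : ConvexOn ℝ (Ici 0) fhat) (hfint : IntegrableOn fhat (Ici 0))
    (hfsq : IntegrableOn (fun y => fhat y ^ 2) (Ici 0))
    (hopt : ∀ h : ℝ → ℝ, ConvexOn ℝ (Ici 0) h → IntegrableOn h (Ici 0) →
      IntegrableOn (fun y => h y ^ 2) (Ici 0) →
      (∫ y in Ici (0 : ℝ), fhat y ^ 2) - (2 / n) * ∑ i, fhat (x i) ≤
        (∫ y in Ici (0 : ℝ), h y ^ 2) - (2 / n) * ∑ i, h (x i))
    (Δ : ℝ → ℝ) (hΔsq : IntegrableOn (fun y => Δ y ^ 2) (Ici 0))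
    (hdir : ∃ t : ℝ, 0 < t ∧ ConvexOn ℝ (Ici 0) (fun y => fhat y + t * Δ y) ∧
      IntegrableOn (fun y => fhat y + t * Δ y) (Ici 0)) :
    (n : ℝ)⁻¹ * ∑ i, Δ (x i) ≤ ∫ y in Ici (0 : ℝ), Δ y * fhat y := by
  obtain ⟨t, ht, hconvt, hintt⟩ := hdir
  have hΔint : IntegrableOn Δ (Ici 0) := by
    have hΔ : Δ = fun y => t⁻¹ * ((fhat y + t * Δ y) - fhat y) := by
      ext y
      field_simp
      ring
    rw [hΔ]
    exact (hintt.sub hfint).const_mul t⁻¹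
  have hf2 : MemLp fhat 2 (volume.restrict (Ici 0)) :=
    (memLp_two_iff_integrable_sq hfint.1).2 hfsq
  have hΔ2 : MemLp Δ 2 (volume.restrict (Ici 0)) :=
    (memLp_two_iff_integrable_sq hΔint.1).2 hΔsq
  have hincrement_nonneg : ∀ s ∈ Ioc 0 t, 0 ≤ s * (2 * ((∫ y in Ici (0 : ℝ), Δ y * fhat y) -
      (n : ℝ)⁻¹ * ∑ i, Δ (x i))) + s ^ 2 * ∫ y in Ici (0 : ℝ), Δ y ^ 2 := by
    intro s hs
    have hle : lsCriterion _ x fhat ≤ lsCriterion _ x (fhat + s • Δ) :=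
      hopt _ (hfconv.add_smul_of_mem_Icc hconvt ht ⟨hs.1.le, hs.2⟩)
        (hfint.add (hΔint.const_mul s)) (hf2.add (hΔ2.const_smul s)).integrable_sq
    rw [lsCriterion_add_smul x hf2 hΔ2] at hle
    linarith
  linarith [nonneg_of_forall_nonneg_mul_add_sq_mul ht hincrement_nonneg]

/-- Proposition 2, least squares case: first-order characterization of the
least squares estimator of a convex density on `[0,∞)`. -/
theorem lse_directional_derivative
    (n : ℕ) (hn : 1 ≤ n) (x : Fin n → ℝ) (hx : ∀ i, 0 < x i)
    (fhat : ℝ → ℝ)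
    (hfconv : ConvexOn ℝ (Ici 0) fhat) (hfint : IntegrableOn fhat (Ici 0))
    (hfsq : IntegrableOn (fun y => fhat y ^ 2) (Ici 0))
    (hopt : ∀ h : ℝ → ℝ, ConvexOn ℝ (Ici 0) h → IntegrableOn h (Ici 0) →
      IntegrableOn (fun y => h y ^ 2) (Ici 0) →
      (∫ y in Ici (0 : ℝ), fhat y ^ 2) - (2 / n) * ∑ i, fhat (x i) ≤
        (∫ y in Ici (0 : ℝ), h y ^ 2) - (2 / n) * ∑ i, h (x i))
    (Δ : ℝ → ℝ) (hΔsq : IntegrableOn (fun y => Δ y ^ 2) (Ici 0))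
    (hdir : ∃ t : ℝ, 0 < t ∧ ConvexOn ℝ (Ici 0) (fun y => fhat y + t * Δ y) ∧
      IntegrableOn (fun y => fhat y + t * Δ y) (Ici 0)) :
    (n : ℝ)⁻¹ * ∑ i, Δ (x i) ≤ ∫ y in Ici (0 : ℝ), Δ y * fhat y :=
  lse_directional_derivative_general n x fhat hfconv hfint hfsq hopt Δ hΔsq hdir
end

section
/- Let r < b be real numbers, let g : [r,b] → ℝ be concave with g(r) = 0, and let ḡ : [r,b] → ℝ be affine with ḡ(r) = 0 and ∫_r^b ḡ(u) du = ∫_r^b g(u) du. Then there exists y₀ ∈ (r,b) such that g − ḡ ≥ 0 on [r, y₀] and g − ḡ ≤ 0 on [y₀, b]; consequently, ∫_r^y g(u) du ≥ ∫_r^y ḡ(u) du for every y ∈ [r,b]. -/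
open MeasureTheory Set

/-!
The difference `h = g - gbar` is concave on `[r, b]`, vanishes at `r` and has integral zero, so
(being continuous inside the interval) it vanishes at some `y₀ ∈ (r, b)`. Concavity and the two
zeros `r < y₀` force `h ≥ 0` between them and `h ≤ 0` beyond `y₀`. Hence `∫_r^y h` is nonnegative
for `y ≤ y₀`, and for `y ≥ y₀` it equals `∫_r^b h - ∫_y^b h = -∫_y^b h ≥ 0`.
-/

theorem ConcaveOn.add_reflect_le_two_mul_midpoint {f : ℝ → ℝ} {a b x : ℝ}
    (hf : ConcaveOn ℝ (Icc a b) f) (hx : x ∈ Icc a b) :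
    f x + f (a + b - x) ≤ 2 * f ((a + b) / 2) := by
  have hx' : a + b - x ∈ Icc a b := ⟨by linarith [hx.2], by linarith [hx.1]⟩
  have := hf.2 hx hx' (by norm_num : (0 : ℝ) ≤ 1 / 2) (by norm_num : (0 : ℝ) ≤ 1 / 2)
    (by norm_num)
  simp only [smul_eq_mul] at this
  rw [show 1 / 2 * x + 1 / 2 * (a + b - x) = (a + b) / 2 by ring] at this
  linarith

theorem ConcaveOn.intervalIntegrable {f : ℝ → ℝ} {a b : ℝ} (hab : a ≤ b)
    (hf : ConcaveOn ℝ (Icc a b) f) : IntervalIntegrable f volume a b := by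
  set m := min (f a) (f b)
  have hlower : ∀ x ∈ Icc a b, m ≤ f x := fun x hx =>
    hf.min_le_of_mem_Icc (left_mem_Icc.2 hab) (right_mem_Icc.2 hab) hx
  have hupper : ∀ x ∈ Icc a b, f x ≤ 2 * f ((a + b) / 2) - m := fun x hx => by
    linarith [hf.add_reflect_le_two_mul_midpoint hx,
      hlower (a + b - x) ⟨by linarith [hx.2], by linarith [hx.1]⟩]
  have hcont : ContinuousOn f (Ioo a b) := interior_Icc (a := a) ▸ hf.continuousOn_interior
  rw [intervalIntegrable_iff_integrableOn_Ioo_of_le hab]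
  refine .of_bound measure_Ioo_lt_top (hcont.aestronglyMeasurable measurableSet_Ioo)
    (max |m| |2 * f ((a + b) / 2) - m|) ?_
  filter_upwards [ae_restrict_mem measurableSet_Ioo] with x hx
  exact abs_le_max_abs_abs (hlower x (Ioo_subset_Icc_self hx)) (hupper x (Ioo_subset_Icc_self hx))

theorem exists_mem_Ioo_eq_zero_of_integral_eq_zero {f : ℝ → ℝ} {a b : ℝ} (hab : a < b)
    (hcont : ContinuousOn f (Ioo a b)) (hfi : IntervalIntegrable f volume a b)
    (hint : ∫ x in a..b, f x = 0) : ∃ c ∈ Ioo a b, f c = 0 := by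
  by_contra! hne
  have hsign : (∀ x ∈ Ioo a b, 0 < f x) ∨ ∀ x ∈ Ioo a b, f x < 0 := by
    by_contra! h
    obtain ⟨⟨x, hx, hfx⟩, ⟨y, hy, hfy⟩⟩ := h
    obtain ⟨c, hc, hfc⟩ := isPreconnected_Ioo.intermediate_value hx hy hcont ⟨hfx, hfy⟩
    exact hne c hc hfc
  rcases hsign with hpos | hneg
  · exact (intervalIntegral.intervalIntegral_pos_of_pos_on hfi hpos hab).ne' hint
  · have := intervalIntegral.intervalIntegral_pos_of_pos_on hfi.neg
      (fun x hx => neg_pos.2 (hneg x hx)) hab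
    simp [intervalIntegral.integral_neg, hint] at this

theorem ConcaveOn.exists_sign_change_of_integral_eq_zero {f : ℝ → ℝ} {a b : ℝ} (hab : a < b)
    (hf : ConcaveOn ℝ (Icc a b) f) (hfa : f a = 0) (hint : ∫ x in a..b, f x = 0) :
    ∃ c ∈ Ioo a b, (∀ x ∈ Icc a c, 0 ≤ f x) ∧ ∀ x ∈ Icc c b, f x ≤ 0 := by
  obtain ⟨c, hc, hfc⟩ := exists_mem_Ioo_eq_zero_of_integral_eq_zero hab
    (interior_Icc (a := a) ▸ hf.continuousOn_interior) (hf.intervalIntegrable hab.le) hint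
  have ha : a ∈ Icc a b := left_mem_Icc.2 hab.le
  refine ⟨c, hc, fun x hx => ?_, fun x hx => ?_⟩
  · simpa [hfa, hfc] using hf.min_le_of_mem_Icc ha (Ioo_subset_Icc_self hc) hx
  · exact hfc ▸
      hf.right_le_of_le_left'' ha ⟨hc.1.le.trans hx.1, hx.2⟩ hc.1 hx.1 (by rw [hfa, hfc])

theorem intervalIntegral.integral_nonneg_of_sign_change {f : ℝ → ℝ} {a b c y : ℝ}
    (hfi : IntervalIntegrable f volume a b) (hpos : ∀ x ∈ Icc a c, 0 ≤ f x)
    (hneg : ∀ x ∈ Icc c b, f x ≤ 0) (hint : 0 ≤ ∫ x in a..b, f x) (hy : y ∈ Icc a b) :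
    0 ≤ ∫ x in a..y, f x := by
  rcases le_total y c with hyc | hcy
  · exact integral_nonneg hy.1 fun x hx => hpos x ⟨hx.1, hx.2.trans hyc⟩
  · have hsub : ∀ {u v}, u ∈ Icc a b → v ∈ Icc a b → IntervalIntegrable f volume u v :=
      fun hu hv => hfi.mono_set (by rw [uIcc_of_le (hy.1.trans hy.2)]; exact uIcc_subset_Icc hu hv)
    have htail : 0 ≤ ∫ x in y..b, -f x :=
      integral_nonneg hy.2 fun x hx => neg_nonneg.2 (hneg x ⟨hcy.trans hx.1, hx.2⟩)
    have := integral_add_adjacent_intervals (hsub (left_mem_Icc.2 (hy.1.trans hy.2)) hy)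
      (hsub hy (right_mem_Icc.2 (hy.1.trans hy.2)))
    rw [integral_neg] at htail
    linarith

/-- Crossing-point argument: a concave function starting at `0` crosses an affine
comparison function with the same integral exactly once from above; consequently its
partial integrals dominate those of the affine function. -/
theorem concave_crosses_affine_once
    (r b : ℝ) (hrb : r < b) (g gbar : ℝ → ℝ)
    (hg : ConcaveOn ℝ (Icc r b) g) (hgr : g r = 0)
    (hgbar : ∃ α β : ℝ, ∀ x, gbar x = α * x + β)
    (hgbarr : gbar r = 0)
    (hint : ∫ u in r..b, gbar u = ∫ u in r..b, g u) :
    ∃ y₀ ∈ Ioo r b,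
      (∀ y ∈ Icc r y₀, gbar y ≤ g y) ∧
      (∀ y ∈ Icc y₀ b, g y ≤ gbar y) ∧
      (∀ y ∈ Icc r b, ∫ u in r..y, gbar u ≤ ∫ u in r..y, g u) := by
  obtain ⟨α, β, hαβ⟩ := hgbar
  have hgbar_eq : gbar = fun x => α * x + β := funext hαβ
  have hgbar_cont : Continuous gbar := hgbar_eq ▸ by fun_prop
  have hgbar_convex : ConvexOn ℝ (Icc r b) gbar :=
    hgbar_eq ▸ ((LinearMap.mulLeft ℝ α).convexOn (convex_Icc r b)).add_const β
  have hgi : ∀ y ∈ Icc r b, IntervalIntegrable g volume r y := fun y hy =>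
    (hg.subset (Icc_subset_Icc_right hy.2) (convex_Icc r y)).intervalIntegrable hy.1
  have hdiff : ∀ y ∈ Icc r b,
      ∫ u in r..y, (g - gbar) u = (∫ u in r..y, g u) - ∫ u in r..y, gbar u :=
    fun y hy => intervalIntegral.integral_sub (hgi y hy) (hgbar_cont.intervalIntegrable r y)
  have hb : b ∈ Icc r b := right_mem_Icc.2 hrb.le
  have hzero : ∫ u in r..b, (g - gbar) u = 0 := by rw [hdiff b hb, hint, sub_self]
  obtain ⟨y₀, hy₀, hpos, hneg⟩ :=
    (hg.sub hgbar_convex).exists_sign_change_of_integral_eq_zero hrb (by simp [hgr, hgbarr]) hzero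
  refine ⟨y₀, hy₀, fun y hy => sub_nonneg.1 (hpos y hy), fun y hy => sub_nonpos.1 (hneg y hy),
    fun y hy => ?_⟩
  have := intervalIntegral.integral_nonneg_of_sign_change (f := g - gbar)
    ((hgi b hb).sub (hgbar_cont.intervalIntegrable r b)) hpos hneg hzero.ge hy
  linarith [hdiff y hy]
end

section
/- Let a < r < b be real numbers and let G : [a,b] → ℝ be continuous on [a,b] and differentiable on (a,b) with derivative g := G′ concave on (a,b) and g(r) = 0. Then for every y ∈ [r,b], G(y) ≥ G(r) + ((y−r)²/(b−r)²)·(G(b) − G(r)), and consequently ∫_r^b G(y) dy ≥ (b−r)·((2/3)·G(r) + (1/3)·G(b)). -/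
open MeasureTheory Set

/-!
Let `Q` be the quadratic interpolant in the statement and `φ = G - Q`. Then `φ` vanishes at `r`
and `b`, and `φ' = g - Q'` is concave (`Q'` is affine) with `φ'(r) = 0`. If `φ` had a negative
minimum on `[r, b]`, it would sit at an interior point `c` with `φ'(c) = 0`; concavity then makes
`φ' ≥ 0` on `[r, c]`, so `φ(c) ≥ φ(r) = 0`, a contradiction. Integrating `Q ≤ G` over `[r, b]`
gives the integral bound.
-/

theorem nonneg_on_Icc_of_concaveOn_deriv {φ ψ : ℝ → ℝ} {r b : ℝ}
    (hφ : ContinuousOn φ (Icc r b)) (hderiv : ∀ x ∈ Ioo r b, HasDerivAt φ (ψ x) x)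
    (hψ : ConcaveOn ℝ (Ico r b) ψ) (hψr : ψ r = 0) (hφr : φ r = 0) (hφb : φ b = 0) :
    ∀ y ∈ Icc r b, 0 ≤ φ y := by
  by_contra! ⟨y, hy, hφy⟩
  obtain ⟨c, hc, hmin⟩ := isCompact_Icc.exists_isMinOn ⟨y, hy⟩ hφ
  have hφc : φ c < 0 := (hmin hy).trans_lt hφy
  have hc' : c ∈ Ioo r b :=
    ⟨hc.1.lt_of_ne (by rintro rfl; linarith), hc.2.lt_of_ne (by rintro rfl; linarith)⟩
  have hψc : ψ c = 0 :=
    (hmin.isLocalMin (Icc_mem_nhds hc'.1 hc'.2)).hasDerivAt_eq_zero (hderiv c hc')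
  have hψ_nonneg : ∀ x ∈ Icc r c, 0 ≤ ψ x := fun x hx => by
    simpa [hψr, hψc] using hψ.ge_on_segment ⟨le_rfl, hc'.1.trans hc'.2⟩ ⟨hc'.1.le, hc'.2⟩
      (by rwa [segment_eq_Icc hc'.1.le])
  have hmono : MonotoneOn φ (Icc r c) := by
    refine monotoneOn_of_hasDerivWithinAt_nonneg (convex_Icc r c)
      (hφ.mono (Icc_subset_Icc_right hc'.2.le)) (fun x hx => ?_)
      (fun x hx => hψ_nonneg x (interior_subset hx))
    rw [interior_Icc] at hx ⊢
    exact (hderiv x ⟨hx.1, hx.2.trans hc'.2⟩).hasDerivWithinAt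
  linarith [hmono (left_mem_Icc.2 hc'.1.le) (right_mem_Icc.2 hc'.1.le) hc'.1.le]

theorem quadratic_interpolation_le_of_concaveOn_deriv {G g : ℝ → ℝ} {r b : ℝ}
    (hG : ContinuousOn G (Icc r b)) (hderiv : ∀ x ∈ Ioo r b, HasDerivAt G (g x) x)
    (hg : ConcaveOn ℝ (Ico r b) g) (hgr : g r = 0) :
    ∀ y ∈ Icc r b, G r + (y - r) ^ 2 / (b - r) ^ 2 * (G b - G r) ≤ G y := by
  set k := 2 * (G b - G r) / (b - r) ^ 2 with hk
  have hQ : ∀ x, HasDerivAt (fun y => G r + (y - r) ^ 2 / (b - r) ^ 2 * (G b - G r))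
      (k * (x - r)) x := fun x => by
    refine ((((hasDerivAt_id x).sub_const r).pow 2 |>.div_const ((b - r) ^ 2)
      |>.mul_const (G b - G r)).const_add (G r)).congr_deriv ?_
    simp only [hk, id]
    ring
  have hψ : ConcaveOn ℝ (Ico r b) fun x => g x - k * (x - r) := by
    refine ((hg.add ((-k • LinearMap.id : ℝ →ₗ[ℝ] ℝ).concaveOn (convex_Ico r b))).add_const
      (k * r)).congr fun x _ => ?_
    simp only [LinearMap.coe_smul, LinearMap.id_coe, Pi.add_apply, Pi.smul_apply, id_eq,
      smul_eq_mul]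
    ring
  intro y hy
  refine sub_nonneg.1 (nonneg_on_Icc_of_concaveOn_deriv
    (hG.sub (Continuous.continuousOn (by fun_prop))) (fun x hx => (hderiv x hx).sub (hQ x))
    hψ (by simp [hgr]) (by simp) ?_ y hy)
  rcases eq_or_ne b r with rfl | hbr
  · simp
  · simp only [Pi.sub_apply]
    field_simp [sub_ne_zero.2 hbr]
    ring

theorem integral_quadratic_interpolation (A B r b : ℝ) :
    ∫ y in r..b, (A + (y - r) ^ 2 / (b - r) ^ 2 * (B - A)) =
      (b - r) * (2 / 3 * A + 1 / 3 * B) := by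
  rcases eq_or_ne r b with rfl | hrb
  · simp
  rw [intervalIntegral.integral_add intervalIntegrable_const
    ((by fun_prop : Continuous _).intervalIntegrable _ _)]
  simp only [intervalIntegral.integral_const, intervalIntegral.integral_mul_const,
    intervalIntegral.integral_div, intervalIntegral.integral_comp_sub_right (fun y => y ^ 2),
    integral_pow, smul_eq_mul, sub_self]
  field_simp [sub_ne_zero.2 hrb.symm]
  ring

/-- Intermediate estimate to the right of an interior maximizer: if `G` has a concave
derivative vanishing at `r`, then `G` is bounded below by a quadratic interpolation on
`[r,b]`, and its integral over `[r,b]` is at least `(b-r)((2/3)G(r) + (1/3)G(b))`. -/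
theorem concave_deriv_lower_bound_right
    (a r b : ℝ) (har : a < r) (hrb : r < b)
    (G g : ℝ → ℝ)
    (hGcont : ContinuousOn G (Icc a b))
    (hderiv : ∀ x ∈ Ioo a b, HasDerivAt G (g x) x)
    (hconc : ConcaveOn ℝ (Ioo a b) g)
    (hgr : g r = 0) :
    (∀ y ∈ Icc r b, G r + (y - r) ^ 2 / (b - r) ^ 2 * (G b - G r) ≤ G y) ∧
    (b - r) * ((2 / 3) * G r + (1 / 3) * G b) ≤ ∫ y in r..b, G y := by
  have hG : ContinuousOn G (Icc r b) := hGcont.mono (Icc_subset_Icc_left har.le)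
  have hbound := quadratic_interpolation_le_of_concaveOn_deriv hG
    (fun x hx => hderiv x (Ioo_subset_Ioo_left har.le hx))
    (hconc.subset (Ico_subset_Ioo_left har) (convex_Ico r b)) hgr
  refine ⟨hbound, ?_⟩
  rw [← integral_quadratic_interpolation]
  exact intervalIntegral.integral_mono_on hrb.le
    ((by fun_prop : Continuous _).intervalIntegrable _ _)
    (hG.intervalIntegrable_of_Icc hrb.le) hbound
end

section
/- Let n ≥ 1 and let x_1, …, x_n ∈ (0,∞) with empirical distribution function 𝔽(r) := (1/n)·#{i : x_i ≤ r}. Let 𝒦 denote the set of all functions h : [0,∞) → ℝ that are convex on [0,∞) and Lebesgue integrable over [0,∞). Suppose f̂ ∈ 𝒦 satisfies f̂(x_i) > 0 for all i and maximizes Ψ(h) := (1/n)·∑_{i=1}^n log h(x_i) − ∫_0^∞ h(x) dx over all h ∈ 𝒦 with h(x_i) > 0 for all i. Suppose moreover there are points 0 = t_0 < t_1 < … < t_m with t_m > max_i x_i such that f̂ is affine on each interval [t_{k−1}, t_k], f̂ = 0 on [t_m, ∞), and at each t_k (1 ≤ k ≤ m) the right derivative of f̂ is strictly larger than the left derivative.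 Let F̂(r) := ∫_0^r f̂(x) dx. Then 𝔽(t_k) = F̂(t_k) for k = 0, 1, …, m. -/
/-!
Since `f̂` maximises `Ψ`, perturbing it in a direction `w` for which `f̂ + ε w` stays convex for
all small `ε > 0` cannot increase `Ψ`; differentiating at `ε = 0` gives the first-order condition
`(1/n) ∑ w(xᵢ) / f̂(xᵢ) ≤ ∫ w`. The directions `w = ±f̂` give `∫ f̂ = 1`.

At a knot `τ`, let `w` be `f̂` on `[0, τ]`, followed by a linear ramp from `f̂(τ)` down to `0` on
`[τ, τ + δ]` (`f̂(τ) ≥ 0`, as `f̂` is convex and vanishes beyond `t_m`). The ramp keeps `f̂ + ε w`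
continuous, and the strict kink of `f̂` at `τ` absorbs the concave kink it creates there, so
`f̂ + ε w` is convex for small `ε`. The first-order condition gives `𝔽(τ) ≤ F̂(τ) + δ f̂(τ) / 2`.
The mirror image (`f̂` on `[τ, ∞)`, ramp up on `[τ - δ, τ]`) gives
`1 - 𝔽(τ) ≤ 1 - F̂(τ) + δ f̂(τ) / 2`. Letting `δ → 0` proves `𝔽(τ) = F̂(τ)`.
-/

open MeasureTheory Set Filter Topology
open scoped Finset

lemma slope_le_slope_left_of_slope_le_slope {f : ℝ → ℝ} {x y z : ℝ} (hxy : x < y)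
    (hyz : y < z) (h : slope f x y ≤ slope f y z) : slope f x y ≤ slope f x z := by
  rw [slope_def_field, slope_def_field] at *
  rw [div_le_div_iff₀ (by linarith) (by linarith)] at *
  nlinarith

lemma slope_le_slope_right_of_slope_le_slope {f : ℝ → ℝ} {x y z : ℝ} (hxy : x < y)
    (hyz : y < z) (h : slope f x y ≤ slope f y z) : slope f x z ≤ slope f y z := by
  rw [slope_def_field, slope_def_field] at *
  rw [div_le_div_iff₀ (by linarith) (by linarith)] at *
  nlinarith

theorem ConvexOn.ite_le_of_hasDerivWithinAt {s : Set ℝ} {f g : ℝ → ℝ} {c a b : ℝ}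
    (hf : ConvexOn ℝ s f) (hg : ConvexOn ℝ s g) (hc : c ∈ s) (hfg : f c = g c)
    (hfa : HasDerivWithinAt f a (Iio c) c) (hgb : HasDerivWithinAt g b (Ioi c) c) (hab : a ≤ b) :
    ConvexOn ℝ s (fun y => if y ≤ c then f y else g y) := by
  set F := fun y => if y ≤ c then f y else g y
  have hFf : ∀ {y}, y ≤ c → F y = f y := fun h => if_pos h
  have hFg : ∀ {y}, c ≤ y → F y = g y := by
    intro y h
    rcases h.eq_or_lt with rfl | h
    · simp [F, hfg]
    · simp [F, not_le.2 h]
  have left {x y z} (hx : x ∈ s) (hz : z ∈ s) (hxy : x < y) (hyz : y < z) (hzc : z ≤ c) :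
      slope F x y ≤ slope F y z := by
    simp only [slope_def_field, hFf hzc, hFf (hyz.le.trans hzc),
      hFf ((hxy.trans hyz).le.trans hzc)]
    exact hf.slope_mono_adjacent hx hz hxy hyz
  have right {x y z} (hx : x ∈ s) (hz : z ∈ s) (hxy : x < y) (hyz : y < z) (hcx : c ≤ x) :
      slope F x y ≤ slope F y z := by
    simp only [slope_def_field, hFg hcx, hFg (hcx.trans hxy.le),
      hFg (hcx.trans (hxy.trans hyz).le)]
    exact hg.slope_mono_adjacent hx hz hxy hyz
  have cross {p q} (hp : p ∈ s) (hq : q ∈ s) (hpc : p < c) (hcq : c < q) :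
      slope F p c ≤ slope F c q :=
    calc slope F p c = slope f p c := by simp only [slope_def_field, hFf le_rfl, hFf hpc.le]
      _ ≤ a := hf.slope_le_of_hasDerivWithinAt_Iio hp hc hpc hfa
      _ ≤ b := hab
      _ ≤ slope g c q := hg.le_slope_of_hasDerivWithinAt_Ioi hc hq hcq hgb
      _ = slope F c q := by simp only [slope_def_field, hFg le_rfl, hFg hcq.le]
  refine convexOn_of_slope_mono_adjacent hf.1 fun {x y z} hx hz hxy hyz => ?_
  rw [← slope_def_field, ← slope_def_field]
  have hy : y ∈ s := hf.1.ordConnected.out hx hz ⟨hxy.le, hyz.le⟩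
  rcases le_or_gt z c with hzc | hcz
  · exact left hx hz hxy hyz hzc
  rcases le_or_gt c x with hcx | hxc
  · exact right hx hz hxy hyz hcx
  rcases lt_trichotomy y c with hyc | rfl | hcy
  · exact (left hx hc hxy hyc le_rfl).trans
      (slope_le_slope_left_of_slope_le_slope hyc hcz (cross hy hz hyc hcz))
  · exact cross hx hz hxc hcz
  · exact (slope_le_slope_right_of_slope_le_slope hxc hcy (cross hx hy hxc hcy)).trans
      (right hc hz hcy hyz le_rfl)

lemma convexOn_affine {s : Set ℝ} (hs : Convex ℝ s) (p q : ℝ) :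
    ConvexOn ℝ s (fun y => p * y + q) :=
  ⟨hs, fun _ _ _ _ a b _ _ hab =>
    le_of_eq (by simp only [smul_eq_mul]; linear_combination (-q) * hab)⟩

theorem ConvexOn.nonneg_of_eventually_eq_zero {f : ℝ → ℝ} {c y : ℝ} (hf : ConvexOn ℝ (Ici c) f)
    (hzero : ∀ᶠ z in atTop, f z = 0) (hy : c ≤ y) : 0 ≤ f y := by
  obtain ⟨z, hz⟩ := eventually_atTop.1 hzero
  set z₁ := max z y + 1
  have hslope := hf.slope_mono_adjacent (x := y) (y := z₁) (z := z₁ + 1) hy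
    (by simp only [mem_Ici]; linarith [le_max_right z y]) (by linarith [le_max_right z y])
    (by linarith)
  rw [hz z₁ (by linarith [le_max_left z y]), hz (z₁ + 1) (by linarith [le_max_left z y]),
    sub_self, zero_div, zero_sub, neg_div, neg_nonpos] at hslope
  exact nonneg_of_mul_nonneg_left (by simpa [div_eq_mul_inv] using hslope) <|
    inv_pos.2 (by linarith [le_max_right z y])

lemma differentiableWithinAt_of_eqOn_affine {f : ℝ → ℝ} {s t : Set ℝ} {c α β : ℝ}
    (ht : t ∈ 𝓝[s] c) (hc : c ∈ t) (h : ∀ y ∈ t, f y = α * y + β) :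
    DifferentiableWithinAt ℝ f s c :=
  ((differentiableAt_id.const_mul α).add_const β).differentiableWithinAt.congr_of_eventuallyEq
    (eventually_of_mem ht h) (h c hc)

lemma HasDerivAt.nonpos_of_eventually_le {φ : ℝ → ℝ} {d a : ℝ} (hφ : HasDerivAt φ d a)
    (h : ∀ᶠ ε in 𝓝[>] a, φ ε ≤ φ a) : d ≤ 0 := by
  refine le_of_tendsto ((hasDerivWithinAt_iff_tendsto_slope' self_notMem_Ioi).mp
    hφ.hasDerivWithinAt) ?_
  filter_upwards [h, self_mem_nhdsWithin] with ε hε (hεa : a < ε)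
  rw [slope_def_field]
  exact div_nonpos_of_nonpos_of_nonneg (by linarith) (by linarith)

lemma eventually_pos_and_mul_lt {d : ℝ} (hd : 0 < d) (K : ℝ) :
    ∀ᶠ ε in 𝓝[>] (0 : ℝ), 0 < ε ∧ ε * K < d := by
  have : ∀ᶠ ε in 𝓝 (0 : ℝ), ε * K < d :=
    ((continuous_id.mul continuous_const).tendsto' 0 0 (by simp)).eventually (gt_mem_nhds hd)
  filter_upwards [self_mem_nhdsWithin, nhdsWithin_le_nhds this] with ε hε h using ⟨hε, h⟩

lemma le_of_eventually_le_add_mul {X A C : ℝ} (h : ∀ᶠ δ in 𝓝[>] (0 : ℝ), X ≤ A + δ * C) :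
    X ≤ A :=
  ge_of_tendsto (tendsto_nhdsWithin_of_tendsto_nhds
    ((continuous_const.add (continuous_id.mul continuous_const)).tendsto' 0 A (by simp))) h

lemma integrableOn_Ici_ite {f g : ℝ → ℝ} {c τ : ℝ} (hτ : c ≤ τ) (hf : IntegrableOn f (Icc c τ))
    (hg : IntegrableOn g (Ioi τ)) :
    IntegrableOn (fun y => if y ≤ τ then f y else g y) (Ici c) := by
  rw [← Icc_union_Ioi_eq_Ici hτ]
  exact (hf.congr_fun (fun y hy => (if_pos hy.2).symm) measurableSet_Icc).union
    (hg.congr_fun (fun y hy => (if_neg (not_le.2 hy)).symm) measurableSet_Ioi)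

lemma setIntegral_Ici_ite {f g : ℝ → ℝ} {c τ : ℝ} (hτ : c ≤ τ) (hf : IntegrableOn f (Icc c τ))
    (hg : IntegrableOn g (Ioi τ)) :
    ∫ y in Ici c, (if y ≤ τ then f y else g y) = (∫ y in Icc c τ, f y) + ∫ y in Ioi τ, g y := by
  have hI := integrableOn_Ici_ite hτ hf hg
  rw [← Icc_union_Ioi_eq_Ici hτ] at hI ⊢
  have hdisj : Disjoint (Icc c τ) (Ioi τ) := Set.disjoint_left.2 fun y h1 h2 => not_lt.2 h1.2 h2
  rw [setIntegral_union hdisj measurableSet_Ioi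
      (hI.mono_set subset_union_left) (hI.mono_set subset_union_right),
    setIntegral_congr_fun measurableSet_Icc fun y hy => if_pos hy.2,
    setIntegral_congr_fun measurableSet_Ioi fun y hy => if_neg (not_le.2 hy)]

noncomputable def tent (τ δ h y : ℝ) : ℝ := h * max (1 - |y - τ| / δ) 0

section tent

variable {τ δ h : ℝ}

lemma continuous_tent : Continuous (tent τ δ h) := by
  unfold tent; fun_prop

lemma tent_of_abs_le (hδ : 0 < δ) {y : ℝ} (hy : |y - τ| ≤ δ) :
    tent τ δ h y = h * (1 - |y - τ| / δ) := by
  rw [tent, max_eq_left (sub_nonneg.2 ((div_le_one hδ).2 hy))]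

lemma tent_of_le_abs (hδ : 0 < δ) {y : ℝ} (hy : δ ≤ |y - τ|) : tent τ δ h y = 0 := by
  rw [tent, max_eq_right (sub_nonpos.2 ((one_le_div hδ).2 hy)), mul_zero]

lemma tent_nonneg (hh : 0 ≤ h) (y : ℝ) : 0 ≤ tent τ δ h y :=
  mul_nonneg hh (le_max_right _ _)

lemma integrable_tent (hδ : 0 < δ) : Integrable (tent τ δ h) :=
  continuous_tent.integrable_of_hasCompactSupport <|
    HasCompactSupport.intro (isCompact_Icc (a := τ - δ) (b := τ + δ)) fun y hy =>
      tent_of_le_abs hδ (by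
        rw [mem_Icc, not_and_or, not_le, not_le] at hy
        rcases hy with hy | hy
        · rw [abs_of_neg (by linarith)]; linarith
        · rw [abs_of_pos (by linarith)]; linarith)

lemma integral_ramp (hδ : 0 < δ) : ∫ u in (0 : ℝ)..δ, h * (1 - u / δ) = δ * h / 2 := by
  rw [intervalIntegral.integral_const_mul, intervalIntegral.integral_sub intervalIntegrable_const
      (intervalIntegral.intervalIntegrable_id.div_const δ),
    intervalIntegral.integral_div, integral_id, intervalIntegral.integral_const]
  field_simp
  ring

lemma integral_Ioi_tent (hδ : 0 < δ) : ∫ y in Ioi τ, tent τ δ h y = δ * h / 2 := by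
  rw [setIntegral_eq_of_subset_of_forall_sdiff_eq_zero measurableSet_Ioi
      (Ioc_subset_Ioi_self : Ioc τ (τ + δ) ⊆ Ioi τ) fun y hy => tent_of_le_abs hδ ?_,
    ← intervalIntegral.integral_of_le (by linarith)]
  · rw [intervalIntegral.integral_congr (g := fun y => h * (1 - (y - τ) / δ)) fun y hy => ?_,
      intervalIntegral.integral_comp_sub_right (fun u => h * (1 - u / δ)), sub_self,
      add_sub_cancel_left, integral_ramp hδ]
    rw [uIcc_of_le (by linarith)] at hy
    have hyτ : |y - τ| = y - τ := abs_of_nonneg (by linarith [hy.1])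
    rw [tent_of_abs_le hδ (by linarith [hy.2]), hyτ]
  · simp only [Set.mem_sdiff, mem_Ioi, mem_Ioc, not_and] at hy
    rw [abs_of_pos (by linarith)]
    linarith [hy.2 hy.1]

lemma integral_Icc_tent (hδ : 0 < δ) {c : ℝ} (hc : c ≤ τ - δ) :
    ∫ y in Icc c τ, tent τ δ h y = δ * h / 2 := by
  rw [setIntegral_eq_of_subset_of_forall_sdiff_eq_zero measurableSet_Icc
      (Icc_subset_Icc_left hc (b := τ)) fun y hy => tent_of_le_abs hδ ?_,
    integral_Icc_eq_integral_Ioc, ← intervalIntegral.integral_of_le (by linarith)]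
  · rw [intervalIntegral.integral_congr (g := fun y => h * (1 - (τ - y) / δ)) fun y hy => ?_,
      intervalIntegral.integral_comp_sub_left (fun u => h * (1 - u / δ)), sub_self,
      sub_sub_cancel, integral_ramp hδ]
    rw [uIcc_of_le (by linarith)] at hy
    have hyτ : |y - τ| = τ - y := by rw [abs_sub_comm]; exact abs_of_nonneg (by linarith [hy.2])
    rw [tent_of_abs_le hδ (by linarith [hy.1]), hyτ]
  · simp only [Set.mem_sdiff, mem_Icc, not_and, not_le] at hy
    have : y < τ - δ := lt_of_not_ge fun h => (hy.2 h).not_ge hy.1.2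
    rw [abs_of_neg (by linarith)]
    linarith

end tent

noncomputable def cutAbove (f : ℝ → ℝ) (τ δ y : ℝ) : ℝ :=
  if y ≤ τ then f y else tent τ δ (f τ) y

noncomputable def cutBelow (f : ℝ → ℝ) (τ δ y : ℝ) : ℝ :=
  if y ≤ τ then tent τ δ (f τ) y else f y

section kink

variable {f : ℝ → ℝ} {τ δ a b : ℝ}

theorem ConvexOn.eventually_add_mul_cutAbove (hf : ConvexOn ℝ (Ici 0) f) (hτ : 0 ≤ τ)
    (hfτ : 0 ≤ f τ) (ha : HasDerivWithinAt f a (Iio τ) τ) (hb : HasDerivWithinAt f b (Ioi τ) τ)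
    (hab : a < b) (hδ : 0 < δ) :
    ∀ᶠ ε in 𝓝[>] 0, ConvexOn ℝ (Ici 0) (fun y => f y + ε * cutAbove f τ δ y) := by
  filter_upwards [eventually_pos_and_mul_lt (sub_pos.2 hab) (a + f τ / δ)] with ε ⟨hε, hεK⟩
  set ramp : ℝ → ℝ := fun y => ε * f τ * (1 - (y - τ) / δ)
  have hramp : HasDerivAt ramp (-(ε * (f τ / δ))) τ :=
    ((((hasDerivAt_id τ).sub_const τ).div_const δ).const_sub 1 |>.const_mul (ε * f τ)).congr_deriv
      (by ring)
  have hramp_nonneg : ∀ y ≤ τ + δ, 0 ≤ ramp y := fun y hy =>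
    mul_nonneg (by positivity) (by rw [sub_nonneg, div_le_one hδ]; linarith)
  have hleft : ConvexOn ℝ (Ici 0) (fun y => (1 + ε) * f y) := hf.smul (by positivity)
  have hright : ConvexOn ℝ (Ici 0) (fun y => max (f y + ramp y) (f y)) :=
    (hf.add ((convexOn_affine (convex_Ici 0) (-(ε * f τ / δ)) (ε * f τ * (1 + τ / δ))).congr
      fun y _ => by simp only [ramp]; ring)).sup hf
  have hright' : HasDerivWithinAt (fun y => max (f y + ramp y) (f y)) (b - ε * (f τ / δ))
      (Ioi τ) τ := by
    refine (hb.add hramp.hasDerivWithinAt).congr_of_eventuallyEq ?_ ?_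
    · filter_upwards [Ioo_mem_nhdsGT (by linarith : τ < τ + δ)] with y hy
      exact max_eq_left (le_add_of_nonneg_right (hramp_nonneg y hy.2.le))
    · exact max_eq_left (le_add_of_nonneg_right (hramp_nonneg τ (by linarith)))
  refine (hleft.ite_le_of_hasDerivWithinAt hright hτ ?_ (ha.const_mul (1 + ε)) hright'
    (by linarith)).congr fun y _ => ?_
  · rw [max_eq_left (le_add_of_nonneg_right (hramp_nonneg τ (by linarith)))]
    simp only [ramp]
    ring
  · simp only [cutAbove, tent]
    split_ifs with hy
    · ring
    · rw [abs_of_pos (by linarith), ← mul_assoc, mul_max_of_nonneg _ _ (by positivity), mul_zero,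
        ← max_add_add_left, add_zero]

theorem ConvexOn.eventually_add_mul_cutBelow (hf : ConvexOn ℝ (Ici 0) f) (hτ : 0 ≤ τ)
    (hfτ : 0 ≤ f τ) (ha : HasDerivWithinAt f a (Iio τ) τ) (hb : HasDerivWithinAt f b (Ioi τ) τ)
    (hab : a < b) (hδ : 0 < δ) :
    ∀ᶠ ε in 𝓝[>] 0, ConvexOn ℝ (Ici 0) (fun y => f y + ε * cutBelow f τ δ y) := by
  filter_upwards [eventually_pos_and_mul_lt (sub_pos.2 hab) (f τ / δ - b)] with ε ⟨hε, hεK⟩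
  set ramp : ℝ → ℝ := fun y => ε * f τ * (1 - (τ - y) / δ)
  have hramp : HasDerivAt ramp (ε * (f τ / δ)) τ :=
    ((((hasDerivAt_id τ).const_sub τ).div_const δ).const_sub 1 |>.const_mul (ε * f τ)).congr_deriv
      (by ring)
  have hramp_nonneg : ∀ y, τ - δ ≤ y → 0 ≤ ramp y := fun y hy =>
    mul_nonneg (by positivity) (by rw [sub_nonneg, div_le_one hδ]; linarith)
  have hleft : ConvexOn ℝ (Ici 0) (fun y => max (f y + ramp y) (f y)) :=
    (hf.add ((convexOn_affine (convex_Ici 0) (ε * f τ / δ) (ε * f τ * (1 - τ / δ))).congr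
      fun y _ => by simp only [ramp]; ring)).sup hf
  have hright : ConvexOn ℝ (Ici 0) (fun y => (1 + ε) * f y) := hf.smul (by positivity)
  have hleft' : HasDerivWithinAt (fun y => max (f y + ramp y) (f y)) (a + ε * (f τ / δ))
      (Iio τ) τ := by
    refine (ha.add hramp.hasDerivWithinAt).congr_of_eventuallyEq ?_ ?_
    · filter_upwards [Ioo_mem_nhdsLT (by linarith : τ - δ < τ)] with y hy
      exact max_eq_left (le_add_of_nonneg_right (hramp_nonneg y hy.1.le))
    · exact max_eq_left (le_add_of_nonneg_right (hramp_nonneg τ (by linarith)))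
  refine (hleft.ite_le_of_hasDerivWithinAt hright hτ ?_ hleft' (hb.const_mul (1 + ε))
    (by linarith)).congr fun y _ => ?_
  · rw [max_eq_left (le_add_of_nonneg_right (hramp_nonneg τ (by linarith)))]
    simp only [ramp]
    ring
  · simp only [cutBelow, tent]
    split_ifs with hy
    · rw [abs_of_nonpos (by linarith), neg_sub, ← mul_assoc,
        mul_max_of_nonneg _ _ (by positivity), mul_zero, ← max_add_add_left, add_zero]
    · ring

end kink

lemma card_filter_le_sum_div {ι : Type*} [Fintype ι] (p : ι → Prop) [DecidablePred p]
    {u v : ι → ℝ} (hv : ∀ i, 0 < v i) (hp : ∀ i, p i → u i = v i) (hu : ∀ i, ¬ p i → 0 ≤ u i) :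
    (#{i | p i} : ℝ) ≤ ∑ i, u i / v i := by
  rw [Finset.natCast_card_filter]
  gcongr with i
  split_ifs with h
  · rw [hp i h, div_self (hv i).ne']
  · exact div_nonneg (hu i h) (hv i).le

/-- `𝔽` in the paper's notation. -/
noncomputable def edf {n : ℕ} (x : Fin n → ℝ) (r : ℝ) : ℝ := (n : ℝ)⁻¹ * #{i | x i ≤ r}

lemma edf_add_inv_mul_card_lt {n : ℕ} (x : Fin n → ℝ) (hn : n ≠ 0) (r : ℝ) :
    edf x r + (n : ℝ)⁻¹ * #{i | r < x i} = 1 := by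
  have hcard := Finset.card_filter_add_card_filter_not (s := Finset.univ) fun i => x i ≤ r
  simp only [not_le, Finset.card_univ, Fintype.card_fin] at hcard
  rw [edf, ← mul_add, ← Nat.cast_add, hcard, inv_mul_cancel₀ (Nat.cast_ne_zero.2 hn)]

/-- `Ψ` in the paper's notation. -/
noncomputable def mleCriterion {n : ℕ} (x : Fin n → ℝ) (h : ℝ → ℝ) : ℝ :=
  (n : ℝ)⁻¹ * ∑ i, Real.log (h (x i)) - ∫ y in Ici (0 : ℝ), h y

def IsMLE {n : ℕ} (x : Fin n → ℝ) (f : ℝ → ℝ) : Prop :=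
  ∀ h : ℝ → ℝ, ConvexOn ℝ (Ici 0) h → IntegrableOn h (Ici 0) → (∀ i, 0 < h (x i)) →
    mleCriterion x h ≤ mleCriterion x f

section MLE

variable {n : ℕ} {x : Fin n → ℝ} {f : ℝ → ℝ}

theorem IsMLE.sum_div_le_integral {w : ℝ → ℝ} (hopt : IsMLE x f) (hf : IntegrableOn f (Ici 0))
    (hfx : ∀ i, 0 < f (x i)) (hw : IntegrableOn w (Ici 0))
    (hconv : ∀ᶠ ε in 𝓝[>] 0, ConvexOn ℝ (Ici 0) (fun y => f y + ε * w y)) :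
    (n : ℝ)⁻¹ * ∑ i, w (x i) / f (x i) ≤ ∫ y in Ici 0, w y := by
  set φ : ℝ → ℝ := fun ε => (n : ℝ)⁻¹ * ∑ i, Real.log (f (x i) + ε * w (x i)) -
    ((∫ y in Ici 0, f y) + ε * ∫ y in Ici 0, w y)
  have hlog (i : Fin n) : HasDerivAt (fun ε => Real.log (f (x i) + ε * w (x i)))
      (w (x i) / f (x i)) 0 := by
    simpa using (((hasDerivAt_id (0 : ℝ)).mul_const (w (x i))).const_add (f (x i))).log
      (by simpa using (hfx i).ne')
  have hlin : HasDerivAt (fun ε => (∫ y in Ici 0, f y) + ε * ∫ y in Ici 0, w y)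
      (∫ y in Ici 0, w y) 0 := by
    simpa using ((hasDerivAt_id (0 : ℝ)).mul_const (∫ y in Ici 0, w y)).const_add
      (∫ y in Ici 0, f y)
  have hφ : HasDerivAt φ ((n : ℝ)⁻¹ * ∑ i, w (x i) / f (x i) - ∫ y in Ici 0, w y) 0 :=
    ((HasDerivAt.fun_sum fun i _ => hlog i).const_mul (n : ℝ)⁻¹).fun_sub hlin
  have hpos : ∀ᶠ ε in 𝓝 (0 : ℝ), ∀ i, 0 < f (x i) + ε * w (x i) := by
    refine eventually_all.2 fun i => ?_
    have hcont : Continuous fun ε : ℝ => f (x i) + ε * w (x i) := by fun_prop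
    exact (hcont.tendsto' 0 _ (by simp)).eventually (lt_mem_nhds (hfx i))
  have hmax : ∀ᶠ ε in 𝓝[>] 0, φ ε ≤ φ 0 := by
    filter_upwards [hconv, nhdsWithin_le_nhds hpos] with ε hε hεpos
    have := hopt _ hε (hf.add (hw.const_mul ε)) hεpos
    simpa [φ, mleCriterion, integral_add hf (hw.const_mul ε), integral_const_mul] using this
  linarith [hφ.nonpos_of_eventually_le hmax]

theorem IsMLE.integral_eq_one (hopt : IsMLE x f) (hn : n ≠ 0) (hf : ConvexOn ℝ (Ici 0) f)
    (hfint : IntegrableOn f (Ici 0)) (hfx : ∀ i, 0 < f (x i)) : ∫ y in Ici 0, f y = 1 := by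
  have hsum : (n : ℝ)⁻¹ * ∑ i, f (x i) / f (x i) = 1 := by
    rw [Finset.sum_congr rfl fun i _ => div_self (hfx i).ne', Finset.sum_const, Finset.card_univ,
      Fintype.card_fin, nsmul_eq_mul, mul_one, inv_mul_cancel₀ (Nat.cast_ne_zero.2 hn)]
  have hup := hopt.sum_div_le_integral hfint hfx hfint <| by
    filter_upwards [self_mem_nhdsWithin] with ε (hε : 0 < ε)
    exact (hf.smul (by positivity : (0 : ℝ) ≤ 1 + ε)).congr fun y _ => by
      simp only [smul_eq_mul]; ring
  have hdown := hopt.sum_div_le_integral hfint hfx hfint.neg <| by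
    filter_upwards [Ioc_mem_nhdsGT one_pos] with ε hε
    exact (hf.smul (by linarith [hε.2] : (0 : ℝ) ≤ 1 - ε)).congr fun y _ => by
      simp only [smul_eq_mul, Pi.neg_apply]; ring
  simp only [Pi.neg_apply, neg_div, Finset.sum_neg_distrib, mul_neg, integral_neg, hsum] at hdown
  linarith

variable {τ a b : ℝ}

theorem IsMLE.edf_le_setIntegral_Icc (hopt : IsMLE x f) (hf : ConvexOn ℝ (Ici 0) f)
    (hfint : IntegrableOn f (Ici 0)) (hfx : ∀ i, 0 < f (x i)) (hτ : 0 ≤ τ) (hfτ : 0 ≤ f τ)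
    (ha : HasDerivWithinAt f a (Iio τ) τ) (hb : HasDerivWithinAt f b (Ioi τ) τ) (hab : a < b) :
    edf x τ ≤ ∫ y in Icc 0 τ, f y := by
  refine le_of_eventually_le_add_mul (C := f τ / 2) ?_
  filter_upwards [self_mem_nhdsWithin] with δ (hδ : 0 < δ)
  have hfIcc : IntegrableOn f (Icc 0 τ) := hfint.mono_set Icc_subset_Ici_self
  have hw : IntegrableOn (cutAbove f τ δ) (Ici 0) :=
    integrableOn_Ici_ite hτ hfIcc (integrable_tent hδ).integrableOn
  calc edf x τ ≤ (n : ℝ)⁻¹ * ∑ i, cutAbove f τ δ (x i) / f (x i) := by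
        unfold edf
        gcongr
        exact card_filter_le_sum_div _ hfx (fun i h => if_pos h)
          fun i h => by simp only [cutAbove, if_neg h]; exact tent_nonneg hfτ _
    _ ≤ ∫ y in Ici 0, cutAbove f τ δ y :=
        hopt.sum_div_le_integral hfint hfx hw (hf.eventually_add_mul_cutAbove hτ hfτ ha hb hab hδ)
    _ = (∫ y in Icc 0 τ, f y) + δ * (f τ / 2) := by
        simp only [cutAbove]
        rw [setIntegral_Ici_ite hτ hfIcc (integrable_tent hδ).integrableOn, integral_Ioi_tent hδ]
        ring

theorem IsMLE.inv_mul_card_lt_le_setIntegral_Ioi (hopt : IsMLE x f) (hf : ConvexOn ℝ (Ici 0) f)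
    (hfint : IntegrableOn f (Ici 0)) (hfx : ∀ i, 0 < f (x i)) (hτ : 0 < τ) (hfτ : 0 ≤ f τ)
    (ha : HasDerivWithinAt f a (Iio τ) τ) (hb : HasDerivWithinAt f b (Ioi τ) τ) (hab : a < b) :
    (n : ℝ)⁻¹ * #{i | τ < x i} ≤ ∫ y in Ioi τ, f y := by
  refine le_of_eventually_le_add_mul (C := f τ / 2) ?_
  filter_upwards [Ioc_mem_nhdsGT hτ] with δ ⟨hδ, hδτ⟩
  have hfIoi : IntegrableOn f (Ioi τ) := hfint.mono_set (Ioi_subset_Ici hτ.le)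
  have hw : IntegrableOn (cutBelow f τ δ) (Ici 0) :=
    integrableOn_Ici_ite hτ.le (integrable_tent hδ).integrableOn hfIoi
  calc (n : ℝ)⁻¹ * #{i | τ < x i} ≤ (n : ℝ)⁻¹ * ∑ i, cutBelow f τ δ (x i) / f (x i) := by
        gcongr
        exact card_filter_le_sum_div _ hfx (fun i h => if_neg (not_le.2 h))
          fun i h => by simp only [cutBelow, if_pos (not_lt.1 h)]; exact tent_nonneg hfτ _
    _ ≤ ∫ y in Ici 0, cutBelow f τ δ y :=
        hopt.sum_div_le_integral hfint hfx hw
          (hf.eventually_add_mul_cutBelow hτ.le hfτ ha hb hab hδ)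
    _ = (∫ y in Ioi τ, f y) + δ * (f τ / 2) := by
        simp only [cutBelow]
        rw [setIntegral_Ici_ite hτ.le (integrable_tent hδ).integrableOn hfIoi,
          integral_Icc_tent hδ (by linarith)]
        ring

theorem IsMLE.edf_eq_setIntegral_Icc (hopt : IsMLE x f) (hn : n ≠ 0)
    (hf : ConvexOn ℝ (Ici 0) f) (hfint : IntegrableOn f (Ici 0)) (hfx : ∀ i, 0 < f (x i))
    (hτ : 0 < τ) (hfτ : 0 ≤ f τ) (ha : HasDerivWithinAt f a (Iio τ) τ)
    (hb : HasDerivWithinAt f b (Ioi τ) τ) (hab : a < b) :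
    edf x τ = ∫ y in Icc 0 τ, f y := by
  have hmass : (∫ y in Icc 0 τ, f y) + ∫ y in Ioi τ, f y = 1 := by
    rw [← hopt.integral_eq_one hn hf hfint hfx]
    simpa using (setIntegral_Ici_ite hτ.le (hfint.mono_set Icc_subset_Ici_self)
      (hfint.mono_set (Ioi_subset_Ici hτ.le))).symm
  linarith [hopt.edf_le_setIntegral_Icc hf hfint hfx hτ.le hfτ ha hb hab,
    hopt.inv_mul_card_lt_le_setIntegral_Ioi hf hfint hfx hτ hfτ ha hb hab,
    edf_add_inv_mul_card_lt x hn τ]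

end MLE

theorem mle_equals_edf_at_knots_general
    (n : ℕ) (hn : 1 ≤ n) (x : Fin n → ℝ) (hx : ∀ i, 0 < x i)
    (EDF : ℝ → ℝ)
    (hEDF : ∀ r : ℝ, EDF r = (n : ℝ)⁻¹ * (Finset.univ.filter fun i => x i ≤ r).card)
    (fhat : ℝ → ℝ)
    (hfconv : ConvexOn ℝ (Ici 0) fhat) (hfint : IntegrableOn fhat (Ici 0))
    (hfpos : ∀ i, 0 < fhat (x i))
    (hopt : ∀ h : ℝ → ℝ, ConvexOn ℝ (Ici 0) h → IntegrableOn h (Ici 0) →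
      (∀ i, 0 < h (x i)) →
      (n : ℝ)⁻¹ * ∑ i, Real.log (h (x i)) - ∫ y in Ici (0 : ℝ), h y ≤
        (n : ℝ)⁻¹ * ∑ i, Real.log (fhat (x i)) - ∫ y in Ici (0 : ℝ), fhat y)
    (m : ℕ) (t : ℕ → ℝ)
    (ht0 : t 0 = 0) (htlt : ∀ k, k < m → t k < t (k + 1))
    (haff : ∀ k, 1 ≤ k → k ≤ m → ∃ α β : ℝ,
      ∀ y ∈ Icc (t (k - 1)) (t k), fhat y = α * y + β)
    (htail : ∀ y, t m ≤ y → fhat y = 0)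
    (hkink : ∀ k, 1 ≤ k → k ≤ m →
      derivWithin fhat (Iic (t k)) (t k) < derivWithin fhat (Ici (t k)) (t k)) :
    ∀ k ≤ m, EDF (t k) = ∫ u in (0 : ℝ)..(t k), fhat u := by
  have hEDF' : ∀ r, EDF r = edf x r := hEDF
  have hmle : IsMLE x fhat := hopt
  have ht : StrictMonoOn t (Iic m) := strictMonoOn_Iic_of_lt_succ fun j hj => htlt j hj
  have hfnonneg : ∀ y, 0 ≤ y → 0 ≤ fhat y := fun y =>
    hfconv.nonneg_of_eventually_eq_zero (eventually_atTop.2 ⟨t m, htail⟩)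
  intro k hk
  rcases Nat.eq_zero_or_pos k with rfl | hk1
  · have hnone : ∀ i, ¬ x i ≤ 0 := fun i => not_le.2 (hx i)
    simp [hEDF', edf, ht0, hnone]
  have hτ : 0 < t k := ht0 ▸ ht (Nat.zero_le m) hk hk1
  have hprev : t (k - 1) < t k := ht (by simp; omega) hk (by omega)
  have hleft : DifferentiableWithinAt ℝ fhat (Iic (t k)) (t k) := by
    obtain ⟨α, β, h⟩ := haff k hk1 hk
    exact differentiableWithinAt_of_eqOn_affine (Icc_mem_nhdsLE hprev) ⟨hprev.le, le_rfl⟩ h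
  have hright : DifferentiableWithinAt ℝ fhat (Ici (t k)) (t k) := by
    rcases hk.lt_or_eq with hkm | rfl
    · obtain ⟨α, β, h⟩ := haff (k + 1) (by omega) hkm
      exact differentiableWithinAt_of_eqOn_affine (Icc_mem_nhdsGE (htlt k hkm))
        ⟨le_rfl, (htlt k hkm).le⟩ (by simpa using h)
    · exact differentiableWithinAt_of_eqOn_affine (α := 0) (β := 0) self_mem_nhdsWithin
        (mem_Ici.2 le_rfl) fun y hy => by simpa using htail y hy
  rw [hEDF', hmle.edf_eq_setIntegral_Icc (by omega) hfconv hfint hfpos hτ (hfnonneg _ hτ.le)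
      (hleft.hasDerivWithinAt.mono Iio_subset_Iic_self)
      (hright.hasDerivWithinAt.mono Ioi_subset_Ici_self) (hkink k hk1 hk),
    integral_Icc_eq_integral_Ioc, ← intervalIntegral.integral_of_le hτ.le]

/-- Equation (8) for the maximum likelihood estimator: the estimated distribution function
agrees with the empirical distribution function at every knot of the piecewise linear
estimated density. -/
theorem mle_equals_edf_at_knots
    (n : ℕ) (hn : 1 ≤ n) (x : Fin n → ℝ) (hx : ∀ i, 0 < x i)
    (EDF : ℝ → ℝ)
    (hEDF : ∀ r : ℝ, EDF r = (n : ℝ)⁻¹ * (Finset.univ.filter fun i => x i ≤ r).card)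
    (fhat : ℝ → ℝ)
    (hfconv : ConvexOn ℝ (Ici 0) fhat) (hfint : IntegrableOn fhat (Ici 0))
    (hfpos : ∀ i, 0 < fhat (x i))
    (hopt : ∀ h : ℝ → ℝ, ConvexOn ℝ (Ici 0) h → IntegrableOn h (Ici 0) →
      (∀ i, 0 < h (x i)) →
      (n : ℝ)⁻¹ * ∑ i, Real.log (h (x i)) - ∫ y in Ici (0 : ℝ), h y ≤
        (n : ℝ)⁻¹ * ∑ i, Real.log (fhat (x i)) - ∫ y in Ici (0 : ℝ), fhat y)
    (m : ℕ) (t : ℕ → ℝ)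
    (ht0 : t 0 = 0) (htlt : ∀ k, k < m → t k < t (k + 1))
    (htmax : ∀ i, x i < t m)
    (haff : ∀ k, 1 ≤ k → k ≤ m → ∃ α β : ℝ,
      ∀ y ∈ Icc (t (k - 1)) (t k), fhat y = α * y + β)
    (htail : ∀ y, t m ≤ y → fhat y = 0)
    (hkink : ∀ k, 1 ≤ k → k ≤ m →
      derivWithin fhat (Iic (t k)) (t k) < derivWithin fhat (Ici (t k)) (t k)) :
    ∀ k ≤ m, EDF (t k) = ∫ u in (0 : ℝ)..(t k), fhat u :=
  mle_equals_edf_at_knots_general n hn x hx EDF hEDF fhat hfconv hfint hfpos hopt m t ht0 htlt haff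
    htail hkink
end
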